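/- arXiv:2301.07632 — 12 statements merged into one kernel-verified Lean document; each statement's English description precedes it below -/
import Mathlib

section
/- For every y ∈ P one has (y − ȳ)ᵀ(ADAᵀ)(y − ȳ) ≤ f(d,l); that is, the polyhedron P is contained in the ellipsoid E(d,l) := {y ∈ ℝⁿ : (y − ȳ)ᵀ(ADAᵀ)(y − ȳ) ≤ f(d,l)}. -/
open Matrix

/-- The polyhedron `P = {y : l ≤ Aᵀy ≤ u}` is contained in the ellipsoid
`E(d,l) = {y : (y-ȳ)ᵀ(ADAᵀ)(y-ȳ) ≤ f(d,l)}`. -/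
theorem stmt_1 {n m : ℕ} (A : Matrix (Fin n) (Fin m) ℝ) (u l d r v : Fin m → ℝ)
    (hd : 0 ≤ d)
    (hr : r = (u + l) / 2) (hv : v = (u - l) / 2)
    (hpd : (A * Matrix.diagonal d * Aᵀ).PosDef)
    (B : Matrix (Fin n) (Fin n) ℝ) (hB : B = (A * Matrix.diagonal d * Aᵀ)⁻¹)
    (ybar : Fin n → ℝ)
    (hybar : ybar = B *ᵥ (A *ᵥ (Matrix.diagonal d *ᵥ r)))
    (f : ℝ)
    (hf : f = r ⬝ᵥ (Matrix.diagonal d *ᵥ (Aᵀ *ᵥ (B *ᵥ (A *ᵥ (Matrix.diagonal d *ᵥ r)))))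
        - r ⬝ᵥ (Matrix.diagonal d *ᵥ r) + v ⬝ᵥ (Matrix.diagonal d *ᵥ v)) :
    ∀ y : Fin n → ℝ, l ≤ Aᵀ *ᵥ y → Aᵀ *ᵥ y ≤ u →
      (y - ybar) ⬝ᵥ ((A * Matrix.diagonal d * Aᵀ) *ᵥ (y - ybar)) ≤ f := by
  intro y hl hu
  set M : Matrix (Fin n) (Fin n) ℝ := A * Matrix.diagonal d * Aᵀ with hM
  set D : Matrix (Fin m) (Fin m) ℝ := Matrix.diagonal d with hD
  set c : Fin n → ℝ := A *ᵥ (D *ᵥ r) with hc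
  set s : Fin m → ℝ := Aᵀ *ᵥ y with hs
  -- M is symmetric
  have hMsym : Mᵀ = M := by
    simp [hM, hD, Matrix.transpose_mul, Matrix.diagonal_transpose, Matrix.mul_assoc]
  -- M * B = 1
  have hMB : M * B = 1 := by
    rw [hB]
    exact Matrix.mul_nonsing_inv M (isUnit_iff_ne_zero.mpr hpd.det_pos.ne')
  -- M *ᵥ ybar = c
  have hMyb : M *ᵥ ybar = c := by
    rw [hybar, Matrix.mulVec_mulVec, hMB, Matrix.one_mulVec]
  -- generic: x ⬝ᵥ (A *ᵥ z) = (Aᵀ *ᵥ x) ⬝ᵥ z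
  have hAd : ∀ (x : Fin n → ℝ) (z : Fin m → ℝ), x ⬝ᵥ (A *ᵥ z) = (Aᵀ *ᵥ x) ⬝ᵥ z := by
    intro x z
    rw [dotProduct_mulVec, ← Matrix.mulVec_transpose]
  -- symmetry of M in the quadratic form
  have hMcomm : ∀ (x w : Fin n → ℝ), x ⬝ᵥ (M *ᵥ w) = w ⬝ᵥ (M *ᵥ x) := by
    intro x w
    rw [dotProduct_mulVec, ← Matrix.mulVec_transpose, hMsym, dotProduct_comm]
  -- y ⬝ᵥ (M *ᵥ y) = s ⬝ᵥ (D *ᵥ s)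
  have hyMy : y ⬝ᵥ (M *ᵥ y) = s ⬝ᵥ (D *ᵥ s) := by
    rw [hM, Matrix.mul_assoc, ← Matrix.mulVec_mulVec, ← Matrix.mulVec_mulVec, hAd]
  -- first term of f equals c ⬝ᵥ (B *ᵥ c)
  have hDsym : ∀ (x z : Fin m → ℝ), x ⬝ᵥ (D *ᵥ z) = (D *ᵥ x) ⬝ᵥ z := by
    intro x z
    rw [dotProduct_mulVec, hD, ← Matrix.mulVec_transpose, Matrix.diagonal_transpose]
  have hAd2 : ∀ (x : Fin m → ℝ) (z : Fin n → ℝ), x ⬝ᵥ (Aᵀ *ᵥ z) = (A *ᵥ x) ⬝ᵥ z := by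
    intro x z
    rw [dotProduct_mulVec, Matrix.vecMul_transpose]
  have ht1 : r ⬝ᵥ (D *ᵥ (Aᵀ *ᵥ (B *ᵥ c))) = c ⬝ᵥ (B *ᵥ c) := by
    rw [hDsym, hAd2]
  -- expand the quadratic form
  have hexp : (y - ybar) ⬝ᵥ (M *ᵥ (y - ybar))
      = y ⬝ᵥ (M *ᵥ y) - 2 * (y ⬝ᵥ c) + c ⬝ᵥ (B *ᵥ c) := by
    rw [Matrix.mulVec_sub, sub_dotProduct, dotProduct_sub, dotProduct_sub,
      hMyb, hMcomm ybar y, hMyb, hybar]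
    have : (B *ᵥ c) ⬝ᵥ c = c ⬝ᵥ (B *ᵥ c) := dotProduct_comm _ _
    rw [this]
    ring
  have hyc : y ⬝ᵥ c = s ⬝ᵥ (D *ᵥ r) := by rw [hc, hAd, hs]
  rw [hexp, hf, ht1, hyMy, hyc]
  have key : s ⬝ᵥ (D *ᵥ s) - 2 * (s ⬝ᵥ (D *ᵥ r)) + r ⬝ᵥ (D *ᵥ r) ≤ v ⬝ᵥ (D *ᵥ v) := by
    have hsum : s ⬝ᵥ (D *ᵥ s) - 2 * (s ⬝ᵥ (D *ᵥ r)) + r ⬝ᵥ (D *ᵥ r)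
        = ∑ i, d i * (s i - r i) ^ 2 := by
      simp only [dotProduct, hD, Matrix.mulVec_diagonal, ← Finset.sum_sub_distrib,
        Finset.mul_sum, ← Finset.sum_add_distrib]
      exact Finset.sum_congr rfl fun i _ => by ring
    have hsum2 : v ⬝ᵥ (D *ᵥ v) = ∑ i, d i * (v i) ^ 2 := by
      simp only [dotProduct, hD, Matrix.mulVec_diagonal]
      exact Finset.sum_congr rfl fun i _ => by ring
    rw [hsum, hsum2]
    apply Finset.sum_le_sum
    intro i _
    have h1 : l i ≤ s i := hl i
    have h2 : s i ≤ u i := hu i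
    have hri : r i = (u i + l i) / 2 := by rw [hr]; rfl
    have hvi : v i = (u i - l i) / 2 := by rw [hv]; rfl
    have hdi : 0 ≤ d i := hd i
    have hb : (s i - r i) ^ 2 ≤ (v i) ^ 2 :=
      sq_le_sq' (by rw [hri, hvi]; linarith) (by rw [hri, hvi]; linarith)
    exact mul_le_mul_of_nonneg_left hb hdi
  linarith
end

section
/- For every y ∈ ℝⁿ the algebraic identity (Aᵀy − l)ᵀ D (Aᵀy − u) = (y − ȳ)ᵀ(ADAᵀ)(y − ȳ) − f(d,l) holds; in particular the aggregated quadratic inequality (Aᵀy − l)ᵀ D (Aᵀy − u) ≤ 0 is equivalent to (y − ȳ)ᵀ(ADAᵀ)(y − ȳ) ≤ f(d,l). -/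
open Matrix

lemma dsymm {m : ℕ} (d a b : Fin m → ℝ) :
    a ⬝ᵥ (Matrix.diagonal d *ᵥ b) = b ⬝ᵥ (Matrix.diagonal d *ᵥ a) := by
  simp only [dotProduct, Matrix.mulVec_diagonal]
  exact Finset.sum_congr rfl fun i _ => by ring

lemma dtrans {n m : ℕ} (A : Matrix (Fin n) (Fin m) ℝ) (y : Fin n → ℝ) (z : Fin m → ℝ) :
    (Aᵀ *ᵥ y) ⬝ᵥ z = y ⬝ᵥ (A *ᵥ z) := by
  rw [← Matrix.vecMul_transpose, ← Matrix.dotProduct_mulVec, Matrix.transpose_transpose]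

/-- The algebraic identity
`(Aᵀy - l)ᵀ D (Aᵀy - u) = (y-ȳ)ᵀ(ADAᵀ)(y-ȳ) - f(d,l)` holds for every `y`; in particular the
aggregated quadratic inequality `(Aᵀy - l)ᵀ D (Aᵀy - u) ≤ 0` is equivalent to
`(y-ȳ)ᵀ(ADAᵀ)(y-ȳ) ≤ f(d,l)`. -/
theorem stmt_2 {n m : ℕ} (A : Matrix (Fin n) (Fin m) ℝ) (u l d r v : Fin m → ℝ)
    (hd : 0 ≤ d)
    (hr : r = (u + l) / 2) (hv : v = (u - l) / 2)
    (hpd : (A * Matrix.diagonal d * Aᵀ).PosDef)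
    (B : Matrix (Fin n) (Fin n) ℝ) (hB : B = (A * Matrix.diagonal d * Aᵀ)⁻¹)
    (ybar : Fin n → ℝ)
    (hybar : ybar = B *ᵥ (A *ᵥ (Matrix.diagonal d *ᵥ r)))
    (f : ℝ)
    (hf : f = r ⬝ᵥ (Matrix.diagonal d *ᵥ (Aᵀ *ᵥ (B *ᵥ (A *ᵥ (Matrix.diagonal d *ᵥ r)))))
        - r ⬝ᵥ (Matrix.diagonal d *ᵥ r) + v ⬝ᵥ (Matrix.diagonal d *ᵥ v)) :
    ∀ y : Fin n → ℝ,
      (Aᵀ *ᵥ y - l) ⬝ᵥ (Matrix.diagonal d *ᵥ (Aᵀ *ᵥ y - u)) =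
        (y - ybar) ⬝ᵥ ((A * Matrix.diagonal d * Aᵀ) *ᵥ (y - ybar)) - f ∧
      ((Aᵀ *ᵥ y - l) ⬝ᵥ (Matrix.diagonal d *ᵥ (Aᵀ *ᵥ y - u)) ≤ 0 ↔
        (y - ybar) ⬝ᵥ ((A * Matrix.diagonal d * Aᵀ) *ᵥ (y - ybar)) ≤ f) := by
  intro y
  rw [← hybar] at hf
  set M := A * Matrix.diagonal d * Aᵀ with hM
  set D := Matrix.diagonal d with hD
  have hdet : IsUnit M.det := isUnit_iff_ne_zero.mpr (ne_of_gt hpd.det_pos)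
  have hMB : M * B = 1 := by rw [hB]; exact Matrix.mul_nonsing_inv M hdet
  have hw : M *ᵥ ybar = A *ᵥ (D *ᵥ r) := by
    rw [hybar, Matrix.mulVec_mulVec, hMB, Matrix.one_mulVec]
  have hMsymm : Mᵀ = M := by
    rw [hM, hD]
    simp [Matrix.transpose_mul, Matrix.diagonal_transpose, Matrix.mul_assoc]
  set x := Aᵀ *ᵥ y with hx
  have h1 : y ⬝ᵥ (M *ᵥ y) = x ⬝ᵥ (D *ᵥ x) := by
    rw [hM, ← Matrix.mulVec_mulVec, ← Matrix.mulVec_mulVec, ← dtrans, hx]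
  have h2 : y ⬝ᵥ (M *ᵥ ybar) = x ⬝ᵥ (D *ᵥ r) := by
    rw [hw, ← dtrans, hx]
  have h3 : ybar ⬝ᵥ (M *ᵥ y) = x ⬝ᵥ (D *ᵥ r) := by
    rw [Matrix.dotProduct_mulVec, ← Matrix.mulVec_transpose, hMsymm, hw,
      dotProduct_comm, ← dtrans, hx]
  have h4 : ybar ⬝ᵥ (M *ᵥ ybar) = r ⬝ᵥ (D *ᵥ (Aᵀ *ᵥ ybar)) := by
    rw [hw, ← dtrans, dsymm]
  have hlx : l ⬝ᵥ (D *ᵥ x) = x ⬝ᵥ (D *ᵥ l) := dsymm d l x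
  have hsum : x ⬝ᵥ (D *ᵥ u) + x ⬝ᵥ (D *ᵥ l) = 2 * (x ⬝ᵥ (D *ᵥ r)) := by
    simp only [dotProduct, hD, Matrix.mulVec_diagonal, Finset.mul_sum,
      ← Finset.sum_add_distrib]
    refine Finset.sum_congr rfl fun i _ => ?_
    have := congrFun hr i
    simp [Pi.div_apply] at this
    rw [this]; ring
  have hlu : l ⬝ᵥ (D *ᵥ u) = r ⬝ᵥ (D *ᵥ r) - v ⬝ᵥ (D *ᵥ v) := by
    simp only [dotProduct, hD, Matrix.mulVec_diagonal, ← Finset.sum_sub_distrib]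
    refine Finset.sum_congr rfl fun i _ => ?_
    have h1 := congrFun hr i
    have h2 := congrFun hv i
    simp [Pi.div_apply] at h1 h2
    rw [h1, h2]; ring
  have key : (x - l) ⬝ᵥ (D *ᵥ (x - u)) = (y - ybar) ⬝ᵥ (M *ᵥ (y - ybar)) - f := by
    simp only [Matrix.mulVec_sub, dotProduct_sub, sub_dotProduct]
    linarith [h1, h2, h3, h4, hlx, hsum, hlu, hf]
  exact ⟨key, by constructor <;> intro h <;> linarith⟩
end

section
/- Suppose λ ∈ ℝ^m satisfies Aλ = −a_j, λ ≥ 0, and −uᵀλ = l_j, and suppose l_j > u_j. Then x := λ + e_j satisfies Ax = 0 and uᵀx₊ − lᵀx₋ < 0, i.e., x is a certificate of infeasibility for the system l ≤ Aᵀy ≤ u. -/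
open Matrix

theorem mulVec_add_single_one_eq_zero {m n R : Type*} [Fintype m] [DecidableEq m] [Ring R]
    (A : Matrix n m R) (lam : m → R) (j : m)
    (hlam : A *ᵥ lam = -(fun k => A k j)) : A *ᵥ (lam + Pi.single j 1) = 0 := by
  rw [mulVec_add, hlam, mulVec_single_one]
  exact neg_add_cancel _

theorem dotProduct_posPart_sub_dotProduct_negPart_of_nonneg {m R : Type*} [Fintype m] [Ring R]
    [LinearOrder R] [IsOrderedRing R] (u l x : m → R) (hx : 0 ≤ x) :
    u ⬝ᵥ (fun i => max (x i) 0) - l ⬝ᵥ (fun i => max (-x i) 0) = u ⬝ᵥ x := by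
  have hpos : (fun i => max (x i) 0) = x := funext fun i => max_eq_left (hx i)
  have hneg : (fun i => max (-x i) 0) = 0 := funext fun i => max_eq_right (neg_nonpos.2 (hx i))
  rw [hpos, hneg, dotProduct_zero, sub_zero]

/-- If `Aλ = -a_j`, `λ ≥ 0`, `-uᵀλ = l_j`, and `l_j > u_j`, then
`x := λ + e_j` satisfies `Ax = 0` and `uᵀx₊ - lᵀx₋ < 0`, i.e. it certifies infeasibility of
`l ≤ Aᵀy ≤ u`. -/
theorem stmt_4 {n m : ℕ} (A : Matrix (Fin n) (Fin m) ℝ) (u l : Fin m → ℝ)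
    (j : Fin m) (lam : Fin m → ℝ)
    (hlam : A *ᵥ lam = -(fun k => A k j))
    (hlampos : 0 ≤ lam)
    (hbound : -(u ⬝ᵥ lam) = l j)
    (hlu : l j > u j)
    (x : Fin m → ℝ) (hx : x = lam + Pi.single j 1) :
    A *ᵥ x = 0 ∧
      u ⬝ᵥ (fun i => max (x i) 0) - l ⬝ᵥ (fun i => max (-x i) 0) < 0 := by
  subst hx
  have hx_nonneg : 0 ≤ lam + Pi.single j 1 :=
    add_nonneg hlampos (Pi.single_nonneg.2 zero_le_one)
  refine ⟨mulVec_add_single_one_eq_zero A lam j hlam, ?_⟩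
  rw [dotProduct_posPart_sub_dotProduct_negPart_of_nonneg u l _ hx_nonneg, dotProduct_add,
    dotProduct_single_one]
  linarith
end

section
/- Suppose Λ is an m×m real matrix with AΛ = −A, Λ ≥ 0 entrywise, and l = −Λᵀu, and suppose x ∈ ℝ^m satisfies Ax = 0 and uᵀx₊ − lᵀx₋ < 0. Then x̂ := x₊ + Λx₋ satisfies Ax̂ = 0, x̂ ≥ 0, and uᵀx̂ < 0; that is, a certificate of infeasibility for l ≤ Aᵀy ≤ u yields one for Aᵀy ≤ u. -/
open Matrix

/-- If `AΛ = -A`, `Λ ≥ 0` entrywise, `l = -Λᵀu`, and `x` certifies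
infeasibility of `l ≤ Aᵀy ≤ u` (i.e. `Ax = 0` and `uᵀx₊ - lᵀx₋ < 0`), then
`x̂ := x₊ + Λx₋` satisfies `Ax̂ = 0`, `x̂ ≥ 0`, and `uᵀx̂ < 0`, a certificate of
infeasibility for `Aᵀy ≤ u`. -/
theorem stmt_5 {n m : ℕ} (A : Matrix (Fin n) (Fin m) ℝ) (u l : Fin m → ℝ)
    (Λ : Matrix (Fin m) (Fin m) ℝ)
    (hΛA : A * Λ = -A) (hΛpos : ∀ i j, 0 ≤ Λ i j) (hl : l = -(Λᵀ *ᵥ u))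
    (x xp xm : Fin m → ℝ)
    (hxp : xp = fun i => max (x i) 0) (hxm : xm = fun i => max (-x i) 0)
    (hAx : A *ᵥ x = 0) (hcert : u ⬝ᵥ xp - l ⬝ᵥ xm < 0)
    (xhat : Fin m → ℝ) (hxhat : xhat = xp + Λ *ᵥ xm) :
    A *ᵥ xhat = 0 ∧ 0 ≤ xhat ∧ u ⬝ᵥ xhat < 0 := by
  have hx : x = xp - xm := by
    funext i
    simp [hxp, hxm, max_def]
    split_ifs <;> linarith
  refine ⟨?_, ?_, ?_⟩
  · have h : A *ᵥ (Λ *ᵥ xm) = -(A *ᵥ xm) := by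
      rw [mulVec_mulVec, hΛA, neg_mulVec]
    rw [hx, mulVec_sub, sub_eq_zero] at hAx
    rw [hxhat, mulVec_add, h, hAx]
    simp
  · intro i
    rw [hxhat]
    have h1 : 0 ≤ xp i := by simp [hxp, le_max_iff]
    have h2 : 0 ≤ (Λ *ᵥ xm) i := by
      simp only [mulVec, dotProduct]
      apply Finset.sum_nonneg
      intro j _
      exact mul_nonneg (hΛpos i j) (by simp [hxm, le_max_iff])
    simpa using add_nonneg h1 h2
  · rw [hxhat, dotProduct_add, dotProduct_mulVec]
    have : vecMul u Λ ⬝ᵥ xm = -(l ⬝ᵥ xm) := by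
      rw [hl]
      rw [← mulVec_transpose]
      simp
    linarith [this, hcert]
end

section
/- Suppose f(d,l) = rᵀDAᵀBADr − rᵀDr + vᵀDv < 0. Then x := D t̄, where t̄ := Aᵀȳ − r, satisfies Ax = 0 and uᵀx₊ − lᵀx₋ < 0; hence x certifies the infeasibility of l ≤ Aᵀy ≤ u. -/
open Matrix

/-- Theorem 2.1 of the paper. If
`f(d,l) = rᵀDAᵀBADr - rᵀDr + vᵀDv < 0`, then `x := D t̄` with `t̄ := Aᵀȳ - r` satisfies
`Ax = 0` and `uᵀx₊ - lᵀx₋ < 0`, certifying infeasibility of `l ≤ Aᵀy ≤ u`. -/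
theorem stmt_6 {n m : ℕ} (A : Matrix (Fin n) (Fin m) ℝ) (u l d r v : Fin m → ℝ)
    (hd : 0 ≤ d)
    (hr : r = (u + l) / 2) (hv : v = (u - l) / 2)
    (hpd : (A * Matrix.diagonal d * Aᵀ).PosDef)
    (B : Matrix (Fin n) (Fin n) ℝ) (hB : B = (A * Matrix.diagonal d * Aᵀ)⁻¹)
    (ybar : Fin n → ℝ)
    (hybar : ybar = B *ᵥ (A *ᵥ (Matrix.diagonal d *ᵥ r)))
    (hf : r ⬝ᵥ (Matrix.diagonal d *ᵥ (Aᵀ *ᵥ (B *ᵥ (A *ᵥ (Matrix.diagonal d *ᵥ r)))))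
        - r ⬝ᵥ (Matrix.diagonal d *ᵥ r) + v ⬝ᵥ (Matrix.diagonal d *ᵥ v) < 0)
    (tbar : Fin m → ℝ) (htbar : tbar = Aᵀ *ᵥ ybar - r)
    (x : Fin m → ℝ) (hx : x = Matrix.diagonal d *ᵥ tbar) :
    A *ᵥ x = 0 ∧
      u ⬝ᵥ (fun i => max (x i) 0) - l ⬝ᵥ (fun i => max (-x i) 0) < 0 := by
  set D := Matrix.diagonal d with hD
  set M := A * D * Aᵀ with hM
  have hdet : IsUnit M.det := hpd.det_pos.ne'.isUnit
  set w := A *ᵥ (D *ᵥ r) with hw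
  have hMy : M *ᵥ ybar = w := by
    rw [hybar, hB, Matrix.mulVec_mulVec, Matrix.mul_nonsing_inv _ hdet, Matrix.one_mulVec]
  set a := Aᵀ *ᵥ ybar with ha
  have hDa : A *ᵥ (D *ᵥ a) = w := by
    rw [ha, Matrix.mulVec_mulVec, Matrix.mulVec_mulVec, ← hM, hMy]
  have hAx : A *ᵥ x = 0 := by
    rw [hx, htbar, Matrix.mulVec_sub, Matrix.mulVec_sub, hDa, ← hw, sub_self]
  refine ⟨hAx, ?_⟩
  have moveA : ∀ z : Fin m → ℝ, a ⬝ᵥ z = ybar ⬝ᵥ (A *ᵥ z) := by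
    intro z
    rw [ha, Matrix.mulVec_transpose, ← Matrix.dotProduct_mulVec]
  have moveD : ∀ y z : Fin m → ℝ, y ⬝ᵥ (D *ᵥ z) = (D *ᵥ y) ⬝ᵥ z := by
    intro y z
    rw [Matrix.dotProduct_mulVec, hD, ← Matrix.diagonal_transpose, Matrix.vecMul_transpose,
      Matrix.diagonal_transpose]
  set S := r ⬝ᵥ (D *ᵥ a) with hS
  have hSw : S = ybar ⬝ᵥ w := by
    rw [hS, moveD, dotProduct_comm, moveA, ← hw]
  have haDa : a ⬝ᵥ (D *ᵥ a) = S := by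
    rw [moveD, dotProduct_comm, moveA, hDa, ← hSw]
  have haDr : a ⬝ᵥ (D *ᵥ r) = S := by
    rw [moveA, ← hw, ← hSw]
  -- hf is stated with B and unfolded w; identify its first term with S
  have hfS : S - r ⬝ᵥ (D *ᵥ r) + v ⬝ᵥ (D *ᵥ v) < 0 := by
    have : r ⬝ᵥ (D *ᵥ (Aᵀ *ᵥ (B *ᵥ w))) = S := by
      rw [← hybar, ← ha]
    rw [← this]; exact hf
  -- quadratic identity for tbar
  have htDt : tbar ⬝ᵥ (D *ᵥ tbar) = r ⬝ᵥ (D *ᵥ r) - S := by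
    rw [htbar, Matrix.mulVec_sub, dotProduct_sub, sub_dotProduct,
      sub_dotProduct, haDa, haDr, hS]
    have : r ⬝ᵥ (D *ᵥ a) = S := hS.symm
    rw [← hS]
    ring
  have hrx : r ⬝ᵥ x = S - r ⬝ᵥ (D *ᵥ r) := by
    rw [hx, htbar, Matrix.mulVec_sub, dotProduct_sub, ← hS]
  -- pointwise bound and summation
  have hptwise : ∀ i, u i * max (x i) 0 - l i * max (-x i) 0
      ≤ r i * x i + (v i * (d i * v i) + tbar i * (d i * tbar i)) / 2 := by
    intro i
    have hui : u i = r i + v i := by rw [hr, hv]; simp; ring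
    have hli : l i = r i - v i := by rw [hr, hv]; simp; ring
    have hxi : x i = d i * tbar i := by rw [hx, hD]; exact Matrix.mulVec_diagonal d tbar i
    have hdi : 0 ≤ d i := hd i
    rcases le_total 0 (x i) with h | h
    · rw [max_eq_left h, max_eq_right (by linarith)]
      rw [hui, hli, hxi] at *
      nlinarith [sq_nonneg (v i - tbar i), sq_nonneg (v i + tbar i), mul_nonneg hdi (sq_nonneg (v i - tbar i)), mul_nonneg hdi (sq_nonneg (v i + tbar i))]
    · rw [max_eq_right h, max_eq_left (by linarith)]
      rw [hui, hli, hxi] at *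
      nlinarith [mul_nonneg hdi (sq_nonneg (v i - tbar i)), mul_nonneg hdi (sq_nonneg (v i + tbar i))]
  have hsum : u ⬝ᵥ (fun i => max (x i) 0) - l ⬝ᵥ (fun i => max (-x i) 0)
      ≤ r ⬝ᵥ x + (v ⬝ᵥ (D *ᵥ v) + tbar ⬝ᵥ (D *ᵥ tbar)) / 2 := by
    have hexp : r ⬝ᵥ x + (v ⬝ᵥ (D *ᵥ v) + tbar ⬝ᵥ (D *ᵥ tbar)) / 2
        = ∑ i, (r i * x i + (v i * (d i * v i) + tbar i * (d i * tbar i)) / 2) := by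
      simp [dotProduct, hD, Matrix.mulVec_diagonal, Finset.sum_add_distrib,
        Finset.sum_div, add_div]
    rw [hexp]
    have : u ⬝ᵥ (fun i => max (x i) 0) - l ⬝ᵥ (fun i => max (-x i) 0)
        = ∑ i, (u i * max (x i) 0 - l i * max (-x i) 0) := by
      simp [dotProduct, Finset.sum_sub_distrib]
    rw [this]
    exact Finset.sum_le_sum fun i _ => hptwise i
  calc u ⬝ᵥ (fun i => max (x i) 0) - l ⬝ᵥ (fun i => max (-x i) 0)
      ≤ r ⬝ᵥ x + (v ⬝ᵥ (D *ᵥ v) + tbar ⬝ᵥ (D *ᵥ tbar)) / 2 := hsum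
    _ < 0 := by rw [hrx, htDt]; linarith
end

section
/- Suppose f(d,l) = 0 and the center ȳ is infeasible, i.e., there exists an index j with a_jᵀȳ > u_j or a_jᵀȳ < l_j. Then there exists x ∈ ℝ^m with Ax = 0 and uᵀx₊ − lᵀx₋ < 0, i.e., a certificate of infeasibility for l ≤ Aᵀy ≤ u. (One may take either x = D t̄ with t̄ := Aᵀȳ − r, or x = D t̄ + ε(e_j − DAᵀBa_j) for a suitably small ε whose sign matches that of the violation.) -/
/-!
Put `t := Aᵀȳ - r`. The normal equations `ADAᵀȳ = ADr` give `ADt = 0`, and `f(d,l) = 0` becomes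
`tᵀDt = vᵀDv`. On `ker A` we have `rᵀx = -tᵀx`, so the value of a candidate certificate is
`∑ (vᵢ|xᵢ| - tᵢxᵢ)`; for `x = Dt` it equals `-½ ∑ dᵢ(vᵢ - |tᵢ|)²`, by AM-GM against `tᵀDt = vᵀDv`.
If this vanishes, then `dᵢ = 0` or `vᵢ = |tᵢ|` for every `i`. Infeasibility at `j` means
`vⱼ < |tⱼ|`, forcing `dⱼ = 0`; then `x = D(t - εAᵀBaⱼ) + εeⱼ` lies in `ker A`, has the signs of `t`
off `j` for small `ε`, and with `ε` of the sign of `tⱼ` its value is `|ε|(vⱼ - |tⱼ|) < 0`.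
-/

open Matrix Filter Topology

section

variable {ι κ : Type*} [Fintype ι]

theorem dotProduct_posPart_sub_dotProduct_negPart {u l r v : ι → ℝ}
    (hr : r = (u + l) / 2) (hv : v = (u - l) / 2) (x : ι → ℝ) :
    u ⬝ᵥ (fun i => max (x i) 0) - l ⬝ᵥ (fun i => max (-x i) 0) =
      ∑ i, (r i * x i + v i * |x i|) := by
  subst hr hv
  simp only [dotProduct, ← Finset.sum_sub_distrib]
  refine Finset.sum_congr rfl fun i _ => ?_
  simp only [Pi.div_apply, Pi.add_apply, Pi.sub_apply, Pi.ofNat_apply]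
  rcases le_total 0 (x i) with h | h
  · rw [max_eq_left h, max_eq_right (by linarith), abs_of_nonneg h]; ring
  · rw [max_eq_right h, max_eq_left (by linarith), abs_of_nonpos h]; ring

theorem sum_mul_add_mul_abs_of_mulVec_eq_zero [Fintype κ] {A : Matrix κ ι ℝ} {x : ι → ℝ}
    (hx : A *ᵥ x = 0) (y : κ → ℝ) (t v : ι → ℝ) :
    ∑ i, ((Aᵀ *ᵥ y - t) i * x i + v i * |x i|) = ∑ i, (v i * |x i| - t i * x i) := by
  have hr : (Aᵀ *ᵥ y - t) ⬝ᵥ x = -(t ⬝ᵥ x) := by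
    rw [sub_dotProduct, dotProduct_comm, dotProduct_mulVec, vecMul_transpose, hx,
      zero_dotProduct, zero_sub]
  simp only [dotProduct] at hr
  rw [Finset.sum_add_distrib, hr, Finset.sum_sub_distrib]
  ring

variable [DecidableEq ι]

theorem dotProduct_diagonal_mulVec_comm (d x y : ι → ℝ) :
    x ⬝ᵥ (diagonal d *ᵥ y) = (diagonal d *ᵥ x) ⬝ᵥ y := by
  simp only [dotProduct, mulVec_diagonal]
  exact Finset.sum_congr rfl fun i _ => by ring

variable [Fintype κ] {A : Matrix κ ι ℝ} {d r : ι → ℝ} {y : κ → ℝ}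

theorem mulVec_diagonal_mulVec_transpose_sub_eq_zero
    (hy : (A * diagonal d * Aᵀ) *ᵥ y = A *ᵥ (diagonal d *ᵥ r)) :
    A *ᵥ (diagonal d *ᵥ (Aᵀ *ᵥ y - r)) = 0 := by
  rw [mulVec_sub, mulVec_sub, mulVec_mulVec, mulVec_mulVec, hy, sub_self]

theorem dotProduct_diagonal_mulVec_residual
    (hy : (A * diagonal d * Aᵀ) *ᵥ y = A *ᵥ (diagonal d *ᵥ r)) :
    (Aᵀ *ᵥ y - r) ⬝ᵥ (diagonal d *ᵥ (Aᵀ *ᵥ y - r)) =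
      r ⬝ᵥ (diagonal d *ᵥ r) - r ⬝ᵥ (diagonal d *ᵥ (Aᵀ *ᵥ y)) := by
  have horth : (Aᵀ *ᵥ y - r) ⬝ᵥ (diagonal d *ᵥ (Aᵀ *ᵥ y)) = 0 := by
    rw [dotProduct_diagonal_mulVec_comm, dotProduct_mulVec, vecMul_transpose,
      mulVec_diagonal_mulVec_transpose_sub_eq_zero hy, zero_dotProduct]
  rw [mulVec_sub, dotProduct_sub, horth, dotProduct_diagonal_mulVec_comm, ← dotProduct_comm,
    mulVec_sub, dotProduct_sub]
  ring

end

theorem eventually_forall_nonneg_mul_sub_mul {ι : Type*} [Finite ι] (t c : ι → ℝ) :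
    ∀ᶠ ε in 𝓝 (0 : ℝ), ∀ i, 0 ≤ t i * (t i - ε * c i) := by
  refine eventually_all.2 fun i => ?_
  rcases eq_or_ne (t i) 0 with h | h
  · simp [h]
  · have hcont : Continuous fun ε : ℝ => t i * (t i - ε * c i) := by fun_prop
    have hpos : 0 < t i * (t i - 0 * c i) := by simpa using mul_self_pos.2 h
    exact (hcont.continuousAt.eventually (lt_mem_nhds hpos)).mono fun _ => le_of_lt

theorem exists_ne_zero_nonneg_mul_of_eventually {p : ℝ → Prop} (h : ∀ᶠ ε in 𝓝 0, p ε)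
    (s : ℝ) : ∃ ε, ε ≠ 0 ∧ 0 ≤ s * ε ∧ p ε := by
  rcases le_total 0 s with hs | hs
  · obtain ⟨ε, hp, hε⟩ := ((h.filter_mono nhdsWithin_le_nhds).and self_mem_nhdsWithin).exists
      (f := 𝓝[>] 0)
    exact ⟨ε, hε.ne', mul_nonneg hs (le_of_lt hε), hp⟩
  · obtain ⟨ε, hp, hε⟩ := ((h.filter_mono nhdsWithin_le_nhds).and self_mem_nhdsWithin).exists
      (f := 𝓝[<] 0)
    exact ⟨ε, hε.ne, mul_nonneg_of_nonpos_of_nonpos hs (le_of_lt hε), hp⟩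

section

variable {ι κ : Type*} [Fintype ι] [DecidableEq ι] {A : Matrix κ ι ℝ} {d t v : ι → ℝ}

theorem exists_mulVec_eq_zero_sum_neg_of_sum_ne_zero (hd : 0 ≤ d)
    (ht : A *ᵥ (diagonal d *ᵥ t) = 0)
    (htv : t ⬝ᵥ (diagonal d *ᵥ t) = v ⬝ᵥ (diagonal d *ᵥ v))
    (hS : ∑ i, d i * (v i - |t i|) ^ 2 ≠ 0) :
    ∃ x, A *ᵥ x = 0 ∧ ∑ i, (v i * |x i| - t i * x i) < 0 := by
  refine ⟨diagonal d *ᵥ t, ht, ?_⟩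
  have hterm : ∀ i, v i * |d i * t i| - t i * (d i * t i) =
      (v i * (d i * v i) - t i * (d i * t i)) / 2 - d i * (v i - |t i|) ^ 2 / 2 := fun i => by
    rw [abs_mul, abs_of_nonneg (hd i), sub_sq, sq_abs]; ring
  have hpos : 0 < ∑ i, d i * (v i - |t i|) ^ 2 :=
    lt_of_le_of_ne (Finset.sum_nonneg fun i _ => mul_nonneg (hd i) (sq_nonneg _)) hS.symm
  simp only [dotProduct, mulVec_diagonal] at htv ⊢
  rw [Finset.sum_congr rfl fun i _ => hterm i, Finset.sum_sub_distrib, ← Finset.sum_div,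
    ← Finset.sum_div, Finset.sum_sub_distrib, htv, sub_self]
  linarith

theorem exists_mulVec_eq_zero_sum_neg_of_sum_eq_zero [Fintype κ] [DecidableEq κ] (hd : 0 ≤ d)
    {B : Matrix κ κ ℝ} (hB : A * diagonal d * Aᵀ * B = 1) (ht : A *ᵥ (diagonal d *ᵥ t) = 0)
    (hS : ∑ i, d i * (v i - |t i|) ^ 2 = 0) {j : ι} (hj : v j < |t j|) :
    ∃ x, A *ᵥ x = 0 ∧ ∑ i, (v i * |x i| - t i * x i) < 0 := by
  have hdv : ∀ i, d i = 0 ∨ v i = |t i| := fun i => by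
    simpa [sub_eq_zero] using (Finset.sum_eq_zero_iff_of_nonneg fun i _ =>
      mul_nonneg (hd i) (sq_nonneg (v i - |t i|))).1 hS i (Finset.mem_univ i)
  have hdj : d j = 0 := (hdv j).resolve_right hj.ne
  set e : ι → ℝ := Pi.single j 1
  set c := Aᵀ *ᵥ (B *ᵥ (A *ᵥ e))
  have hc : A *ᵥ (diagonal d *ᵥ c) = A *ᵥ e := by
    rw [show A *ᵥ (diagonal d *ᵥ c) = (A * diagonal d * Aᵀ * B) *ᵥ (A *ᵥ e) by
      simp only [c, mulVec_mulVec, Matrix.mul_assoc], hB, one_mulVec]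
  obtain ⟨ε, hε, htε, hsign⟩ :=
    exists_ne_zero_nonneg_mul_of_eventually (eventually_forall_nonneg_mul_sub_mul t c) (t j)
  set x := diagonal d *ᵥ (t - ε • c) + ε • e
  have hx : ∀ i, x i = d i * (t i - ε * c i) + ε * e i := fun i => by
    simp [x, mulVec_diagonal]
  refine ⟨x, by simp only [x, mulVec_add, mulVec_sub, mulVec_smul, ht, hc]; abel, ?_⟩
  rw [Finset.sum_eq_single j]
  · have hxj : x j = ε := by simp [hx, hdj, e]
    rw [hxj, ← abs_of_nonneg htε, abs_mul, sub_neg]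
    exact mul_lt_mul_of_pos_right hj (abs_pos.2 hε)
  · intro i _ hij
    have hxi : x i = d i * (t i - ε * c i) := by simp [hx, e, hij]
    rcases hdv i with hdi | hvi
    · simp [hxi, hdi]
    · have htx : 0 ≤ t i * x i := by
        rw [hxi, mul_left_comm]; exact mul_nonneg (hd i) (hsign i)
      rw [hvi, ← abs_mul, abs_of_nonneg htx, sub_self]
  · simp

end

/-- Proposition 2.2 of the paper. If `f(d,l) = 0` and the center `ȳ`
is infeasible, then there is a certificate of infeasibility `x` with `Ax = 0` and
`uᵀx₊ - lᵀx₋ < 0` for the system `l ≤ Aᵀy ≤ u`. -/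
theorem stmt_8 {n m : ℕ} (A : Matrix (Fin n) (Fin m) ℝ) (u l d r v : Fin m → ℝ)
    (hd : 0 ≤ d)
    (hr : r = (u + l) / 2) (hv : v = (u - l) / 2)
    (hpd : (A * Matrix.diagonal d * Aᵀ).PosDef)
    (B : Matrix (Fin n) (Fin n) ℝ) (hB : B = (A * Matrix.diagonal d * Aᵀ)⁻¹)
    (ybar : Fin n → ℝ)
    (hybar : ybar = B *ᵥ (A *ᵥ (Matrix.diagonal d *ᵥ r)))
    (hf : r ⬝ᵥ (Matrix.diagonal d *ᵥ (Aᵀ *ᵥ (B *ᵥ (A *ᵥ (Matrix.diagonal d *ᵥ r)))))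
        - r ⬝ᵥ (Matrix.diagonal d *ᵥ r) + v ⬝ᵥ (Matrix.diagonal d *ᵥ v) = 0)
    (hinfeas : ∃ j : Fin m, (fun k => A k j) ⬝ᵥ ybar > u j ∨ (fun k => A k j) ⬝ᵥ ybar < l j) :
    ∃ x : Fin m → ℝ, A *ᵥ x = 0 ∧
      u ⬝ᵥ (fun i => max (x i) 0) - l ⬝ᵥ (fun i => max (-x i) 0) < 0 := by
  obtain ⟨j, hj⟩ := hinfeas
  have hMB : A * diagonal d * Aᵀ * B = 1 :=
    hB ▸ mul_nonsing_inv _ ((isUnit_iff_isUnit_det _).1 hpd.isUnit)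
  have hnormal : (A * diagonal d * Aᵀ) *ᵥ ybar = A *ᵥ (diagonal d *ᵥ r) := by
    rw [hybar, mulVec_mulVec, hMB, one_mulVec]
  set t := Aᵀ *ᵥ ybar - r
  have ht := mulVec_diagonal_mulVec_transpose_sub_eq_zero hnormal
  have htv : t ⬝ᵥ (diagonal d *ᵥ t) = v ⬝ᵥ (diagonal d *ᵥ v) := by
    rw [dotProduct_diagonal_mulVec_residual hnormal]
    rw [← hybar] at hf
    linarith
  have hvt : v j < |t j| := by
    have hcol : (fun k => A k j) ⬝ᵥ ybar = t j + r j := by simp [t]; rfl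
    have hu : u j = r j + v j := by simp [hr, hv]; ring
    have hl : l j = r j - v j := by simp [hr, hv]; ring
    rcases hj with h | h
    · linarith [le_abs_self (t j)]
    · linarith [neg_abs_le (t j)]
  obtain ⟨x, hx, hneg⟩ : ∃ x, A *ᵥ x = 0 ∧ ∑ i, (v i * |x i| - t i * x i) < 0 := by
    by_cases hS : ∑ i, d i * (v i - |t i|) ^ 2 = 0
    · exact exists_mulVec_eq_zero_sum_neg_of_sum_eq_zero hd hMB ht hS hvt
    · exact exists_mulVec_eq_zero_sum_neg_of_sum_ne_zero hd ht htv hS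
  refine ⟨x, hx, ?_⟩
  rwa [dotProduct_posPart_sub_dotProduct_negPart hr hv,
    show r = Aᵀ *ᵥ ybar - t by simp [t], sum_mul_add_mul_abs_of_mulVec_eq_zero hx]
end

section
/- Suppose Λ is an m×m real matrix with AΛ = −A, Λ ≥ 0 entrywise, and l = −Λᵀu, and suppose λ ∈ ℝ^m satisfies Aλ = −a_j. Then λ̂ := Λλ₋ + λ₊ satisfies λ̂ ≥ 0, Aλ̂ = −a_j, and −uᵀλ̂ = lᵀλ₋ − uᵀλ₊; that is, λ̂ is a nonnegative dual vector certifying the same lower bound θ(λ) = lᵀλ₋ − uᵀλ₊ on a_jᵀy using only the upper-bound system Aᵀy ≤ u. -/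
open Matrix

/-- If `AΛ = -A`, `Λ ≥ 0`, `l = -Λᵀu`, and `Aλ = -a_j`, then
`λ̂ := Λλ₋ + λ₊` is nonnegative, satisfies `Aλ̂ = -a_j`, and certifies the same lower bound:
`-uᵀλ̂ = lᵀλ₋ - uᵀλ₊`. -/
theorem stmt_10 {n m : ℕ} (A : Matrix (Fin n) (Fin m) ℝ) (u l : Fin m → ℝ)
    (Λ : Matrix (Fin m) (Fin m) ℝ)
    (hΛA : A * Λ = -A) (hΛpos : ∀ i j, 0 ≤ Λ i j) (hl : l = -(Λᵀ *ᵥ u))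
    (j : Fin m) (lam lamp lamm : Fin m → ℝ)
    (hlamp : lamp = fun i => max (lam i) 0) (hlamm : lamm = fun i => max (-lam i) 0)
    (hlam : A *ᵥ lam = -(fun k => A k j))
    (lamhat : Fin m → ℝ) (hlamhat : lamhat = Λ *ᵥ lamm + lamp) :
    0 ≤ lamhat ∧ A *ᵥ lamhat = -(fun k => A k j) ∧
      -(u ⬝ᵥ lamhat) = l ⬝ᵥ lamm - u ⬝ᵥ lamp := by
  have hsplit : lamp - lamm = lam := by
    funext i
    simp only [hlamp, hlamm, Pi.sub_apply, max_def]
    split_ifs <;> linarith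
  have hmpos : 0 ≤ lamm := by
    intro i; simp [hlamm, le_max_right]
  have hppos : 0 ≤ lamp := by
    intro i; simp [hlamp, le_max_right]
  refine ⟨?_, ?_, ?_⟩
  · intro i
    simp only [hlamhat, Pi.add_apply, Pi.zero_apply]
    have : 0 ≤ (Λ *ᵥ lamm) i := by
      simp only [mulVec, dotProduct]
      exact Finset.sum_nonneg fun k _ => mul_nonneg (hΛpos i k) (hmpos k)
    have := hppos i
    simp only [Pi.zero_apply] at this
    positivity
  · rw [hlamhat, mulVec_add, mulVec_mulVec, hΛA, neg_mulVec, ← hlam,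
      ← hsplit, mulVec_sub]
    abel
  · have h1 : l ⬝ᵥ lamm = -(u ⬝ᵥ (Λ *ᵥ lamm)) := by
      rw [hl, neg_dotProduct, mulVec_transpose, ← dotProduct_mulVec]
    rw [hlamhat, dotProduct_add, h1]
    ring
end

section
/- Let d ≥ 0 and l ∈ ℝ^m satisfy f(d,l) > 0, and let d̃ ≥ 0, l̃ ∈ ℝ^m satisfy f(d̃,l̃) > 0, with both ADAᵀ and AD̃Aᵀ positive definite. Let 1 ≤ j ≤ m and suppose (1/f(d̃,l̃)) d̃ = α ( (1/f(d,l)) d + (2/(m−1)) (1/γ_j(d,l)²) e_j ) for a scalar α ≥ (m²−1)/m². If γ_j(d,l) ≥ τ(A,u), then ψ(d̃,l̃) ≤ exp(−1/(2(m+1))) · ψ(d,l). -/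
open Matrix

/-- `f(d,l) := rᵀDAᵀBADr - rᵀDr + vᵀDv` with `D = Diag d`, `r = (u+l)/2`, `v = (u-l)/2`,
`B = (ADAᵀ)⁻¹`. -/
noncomputable def fval {n m : ℕ} (A : Matrix (Fin n) (Fin m) ℝ) (u d l : Fin m → ℝ) : ℝ :=
  let D := Matrix.diagonal d
  let r := (u + l) / 2
  let v := (u - l) / 2
  let B := (A * D * Aᵀ)⁻¹
  r ⬝ᵥ (D *ᵥ (Aᵀ *ᵥ (B *ᵥ (A *ᵥ (D *ᵥ r))))) - r ⬝ᵥ (D *ᵥ r) + v ⬝ᵥ (D *ᵥ v)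

/-- `γ_i(d,l) := sqrt(f(d,l) · a_iᵀ B a_i)`, the semi-width of `E(d,l)` in direction `a_i`. -/
noncomputable def gamma {n m : ℕ} (A : Matrix (Fin n) (Fin m) ℝ) (u d l : Fin m → ℝ)
    (i : Fin m) : ℝ :=
  Real.sqrt (fval A u d l *
    ((fun k => A k i) ⬝ᵥ ((A * Matrix.diagonal d * Aᵀ)⁻¹ *ᵥ (fun k => A k i))))

/-- `τ(A,u) := |z(A,u)|` where `z(A,u) := inf_y max_i (a_iᵀy - u_i)`. -/
noncomputable def tau {n m : ℕ} (A : Matrix (Fin n) (Fin m) ℝ) (u : Fin m → ℝ) : ℝ :=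
  |⨅ y : Fin n → ℝ, ⨆ i : Fin m, ((fun k => A k i) ⬝ᵥ y - u i)|

/-- The potential `ψ(d,l) := ∏_i max{γ_i(d,l), (m/(m+1)) τ(A,u)}`. -/
noncomputable def psi {n m : ℕ} (A : Matrix (Fin n) (Fin m) ℝ) (u d l : Fin m → ℝ) : ℝ :=
  ∏ i : Fin m, max (gamma A u d l i) ((m / ((m : ℝ) + 1)) * tau A u)

/-! Write `P = A D Aᵀ`, `a = a_j`, `f = f(d,l)` and `c = 2 / ((m-1) γ_j²)`. The update relation
says `A D̃ Aᵀ = (f̃ α / f) (P + f c a aᵀ)`, so by the Sherman–Morrison formula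
`γ̃_i² = (f/α) a_iᵀ (P + f c a aᵀ)⁻¹ a_i`. This is at most `γ_i²/α ≤ m²/(m²-1) γ_i²` for every `i`,
and equals `γ_j² / (α (1 + c γ_j²)) ≤ (m/(m+1))² γ_j²` for `i = j`. As `γ_j ≥ τ`, the `j`-th factor
of `ψ` shrinks by `m/(m+1)` while the others grow by at most `κ = m/√(m²-1)`, and
`(m/(m+1)) κ^(m-1) ≤ exp(-1/(m+1)) exp(1/(2(m+1)))`. -/

section ShermanMorrison

variable {ι : Type*} [Fintype ι] {P : Matrix ι ι ℝ}

lemma Matrix.PosDef.add_smul_vecMulVec_self (hP : P.PosDef) (a : ι → ℝ) {c : ℝ} (hc : 0 ≤ c) :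
    (P + c • vecMulVec a a).PosDef :=
  hP.add_posSemidef ((posSemidef_vecMulVec_self_star a).smul hc)

variable [DecidableEq ι]

lemma Matrix.PosDef.vecMul_inv (hP : P.PosDef) (x : ι → ℝ) : x ᵥ* P⁻¹ = P⁻¹ *ᵥ x := by
  rw [← mulVec_transpose, ← conjTranspose_eq_transpose_of_trivial, hP.isHermitian.inv.eq]

lemma Matrix.PosDef.dotProduct_inv_mulVec_self_nonneg (hP : P.PosDef) (x : ι → ℝ) :
    0 ≤ x ⬝ᵥ P⁻¹ *ᵥ x := by
  simpa using hP.inv.posSemidef.dotProduct_mulVec_nonneg x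

lemma Matrix.PosDef.inv_add_smul_vecMulVec_self (hP : P.PosDef) (a : ι → ℝ) {c : ℝ}
    (hc : 0 ≤ c) :
    (P + c • vecMulVec a a)⁻¹ =
      P⁻¹ - (c / (1 + c * (a ⬝ᵥ P⁻¹ *ᵥ a))) • vecMulVec (P⁻¹ *ᵥ a) (P⁻¹ *ᵥ a) := by
  have hden : 1 + c * (a ⬝ᵥ P⁻¹ *ᵥ a) ≠ 0 := by
    have := hP.dotProduct_inv_mulVec_self_nonneg a
    positivity
  have hPP : P * P⁻¹ = 1 := mul_nonsing_inv P (isUnit_iff_ne_zero.mpr hP.det_pos.ne')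
  apply inv_eq_right_inv
  simp only [add_mul, mul_sub, Matrix.smul_mul, Matrix.mul_smul, hPP, mul_vecMulVec,
    vecMulVec_mul, mulVec_mulVec, one_mulVec, hP.vecMul_inv, smul_mulVec, vecMulVec_mulVec,
    op_smul_eq_smul, smul_vecMulVec]
  rw [dotProduct_comm (P⁻¹ *ᵥ a)]
  generalize a ⬝ᵥ P⁻¹ *ᵥ a = g at hden
  match_scalars
  · field_simp
  · field_simp
    ring

lemma Matrix.PosDef.dotProduct_inv_add_smul_vecMulVec_self_mulVec (hP : P.PosDef) (a : ι → ℝ)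
    {c : ℝ} (hc : 0 ≤ c) (x : ι → ℝ) :
    x ⬝ᵥ (P + c • vecMulVec a a)⁻¹ *ᵥ x =
      x ⬝ᵥ P⁻¹ *ᵥ x - c / (1 + c * (a ⬝ᵥ P⁻¹ *ᵥ a)) * (x ⬝ᵥ P⁻¹ *ᵥ a) ^ 2 := by
  rw [hP.inv_add_smul_vecMulVec_self a hc, sub_mulVec, smul_mulVec, vecMulVec_mulVec,
    op_smul_eq_smul, dotProduct_sub, dotProduct_smul, dotProduct_smul, smul_eq_mul, smul_eq_mul,
    dotProduct_comm (P⁻¹ *ᵥ a) x]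
  ring

lemma Matrix.PosDef.dotProduct_inv_add_smul_vecMulVec_self_mulVec_le (hP : P.PosDef)
    (a : ι → ℝ) {c : ℝ} (hc : 0 ≤ c) (x : ι → ℝ) :
    x ⬝ᵥ (P + c • vecMulVec a a)⁻¹ *ᵥ x ≤ x ⬝ᵥ P⁻¹ *ᵥ x := by
  rw [hP.dotProduct_inv_add_smul_vecMulVec_self_mulVec a hc]
  have := hP.dotProduct_inv_mulVec_self_nonneg a
  have : 0 ≤ c / (1 + c * (a ⬝ᵥ P⁻¹ *ᵥ a)) * (x ⬝ᵥ P⁻¹ *ᵥ a) ^ 2 := by positivity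
  linarith

lemma Matrix.PosDef.dotProduct_inv_add_smul_vecMulVec_self_mulVec_self (hP : P.PosDef)
    (a : ι → ℝ) {c : ℝ} (hc : 0 ≤ c) :
    a ⬝ᵥ (P + c • vecMulVec a a)⁻¹ *ᵥ a = (a ⬝ᵥ P⁻¹ *ᵥ a) / (1 + c * (a ⬝ᵥ P⁻¹ *ᵥ a)) := by
  rw [hP.dotProduct_inv_add_smul_vecMulVec_self_mulVec a hc]
  have := hP.dotProduct_inv_mulVec_self_nonneg a
  generalize a ⬝ᵥ P⁻¹ *ᵥ a = g at this
  have : 1 + c * g ≠ 0 := by positivity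
  field_simp
  ring

end ShermanMorrison

lemma Matrix.mul_diagonal_add_smul_single_mul_transpose {R κ ι : Type*} [CommSemiring R]
    [Fintype ι] [DecidableEq ι] (A : Matrix κ ι R) (d : ι → R) (c : R) (j : ι) :
    A * diagonal (d + c • Pi.single j 1) * Aᵀ =
      A * diagonal d * Aᵀ + c • vecMulVec (fun k => A k j) (fun k => A k j) := by
  ext k k'
  simp only [mul_apply, diagonal_apply, Pi.add_apply, Pi.smul_apply, Pi.single_apply, smul_eq_mul,
    mul_ite, mul_one, mul_zero, mul_add, Finset.sum_ite_eq', Finset.mem_univ, ↓reduceIte,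
    transpose_apply, add_mul, ite_mul, zero_mul, Finset.sum_add_distrib, add_apply, smul_apply,
    vecMulVec_apply]
  ring

section Gamma

variable {n m : ℕ} (A : Matrix (Fin n) (Fin m) ℝ) (u : Fin m → ℝ)

lemma gamma_nonneg (d l : Fin m → ℝ) (i : Fin m) : 0 ≤ gamma A u d l i := Real.sqrt_nonneg _

lemma sq_gamma {d l : Fin m → ℝ} (hpd : (A * diagonal d * Aᵀ).PosDef)
    (hf : 0 ≤ fval A u d l) (i : Fin m) :
    gamma A u d l i ^ 2 = fval A u d l *
      ((fun k => A k i) ⬝ᵥ (A * diagonal d * Aᵀ)⁻¹ *ᵥ (fun k => A k i)) :=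
  Real.sq_sqrt (mul_nonneg hf (hpd.dotProduct_inv_mulVec_self_nonneg _))

variable {d l dt lt : Fin m → ℝ} {j : Fin m} {α c : ℝ}
  (hpd : (A * diagonal d * Aᵀ).PosDef) (hpdt : (A * diagonal dt * Aᵀ).PosDef)
  (hf : 0 < fval A u d l) (hft : 0 < fval A u dt lt) (hα : 0 < α) (hc : 0 ≤ c)
  (hrel : (1 / fval A u dt lt) • dt =
    α • ((1 / fval A u d l) • d + c • (Pi.single j 1 : Fin m → ℝ)))
include hpd hpdt hf hft hα hc hrel

lemma sq_gamma_update (i : Fin m) :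
    gamma A u dt lt i ^ 2 = fval A u d l / α * ((fun k => A k i) ⬝ᵥ
      (A * diagonal d * Aᵀ + (fval A u d l * c) • vecMulVec (fun k => A k j) (fun k => A k j))⁻¹
        *ᵥ (fun k => A k i)) := by
  rw [sq_gamma A u hpdt hft.le]
  set f := fval A u d l
  set ft := fval A u dt lt
  have hk : ft * α / f ≠ 0 := by positivity
  have hdt : dt = (ft * α / f) • (d + (f * c) • Pi.single j 1) := by
    ext i
    have := congrFun hrel i
    simp only [Pi.smul_apply, Pi.add_apply, smul_eq_mul] at this ⊢
    field_simp at this ⊢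
    linear_combination this
  have hQ := hpd.add_smul_vecMulVec_self (fun k => A k j) (mul_nonneg hf.le hc)
  have hPt : (A * diagonal dt * Aᵀ)⁻¹ = (ft * α / f)⁻¹ •
      (A * diagonal d * Aᵀ + (f * c) • vecMulVec (fun k => A k j) (fun k => A k j))⁻¹ := by
    rw [hdt, diagonal_smul, Matrix.mul_smul, Matrix.smul_mul,
      mul_diagonal_add_smul_single_mul_transpose]
    refine inv_eq_left_inv ?_
    rw [smul_mul_smul_comm, inv_mul_cancel₀ hk, one_smul,
      nonsing_inv_mul _ (isUnit_iff_ne_zero.mpr hQ.det_pos.ne')]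
  rw [hPt, smul_mulVec, dotProduct_smul, smul_eq_mul]
  field_simp

lemma sq_gamma_update_le (i : Fin m) : gamma A u dt lt i ^ 2 ≤ gamma A u d l i ^ 2 / α := by
  rw [sq_gamma_update A u hpd hpdt hf hft hα hc hrel, sq_gamma A u hpd hf.le, mul_div_right_comm]
  gcongr
  exact hpd.dotProduct_inv_add_smul_vecMulVec_self_mulVec_le _ (mul_nonneg hf.le hc) _

lemma sq_gamma_update_self :
    gamma A u dt lt j ^ 2 = gamma A u d l j ^ 2 / (α * (1 + c * gamma A u d l j ^ 2)) := by
  rw [sq_gamma_update A u hpd hpdt hf hft hα hc hrel, sq_gamma A u hpd hf.le,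
    hpd.dotProduct_inv_add_smul_vecMulVec_self_mulVec_self _ (mul_nonneg hf.le hc)]
  field_simp

end Gamma

lemma prod_max_le_mul_pow_mul_prod_max {ι : Type*} [Fintype ι] [DecidableEq ι] {x y : ι → ℝ}
    {t β κ : ℝ} (j : ι) (ht : 0 ≤ t) (hβ : 0 ≤ β) (hκ : 1 ≤ κ) (hxj : x j ≤ β * y j)
    (htj : t ≤ β * y j) (hx : ∀ i ≠ j, x i ≤ κ * y i) :
    ∏ i, max (x i) t ≤ β * κ ^ (Fintype.card ι - 1) * ∏ i, max (y i) t := by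
  have hcard : ({j}ᶜ : Finset ι).card = Fintype.card ι - 1 := by
    rw [Finset.card_compl, Finset.card_singleton]
  rw [Fintype.prod_eq_mul_prod_compl j, Fintype.prod_eq_mul_prod_compl j (fun i => max (y i) t),
    mul_mul_mul_comm, ← hcard, ← Finset.prod_const, ← Finset.prod_mul_distrib]
  gcongr with i hi
  · have hy : β * y j ≤ β * max (y j) t := mul_le_mul_of_nonneg_left (le_max_left _ _) hβ
    exact max_le (hxj.trans hy) (htj.trans hy)
  · have hκ0 : 0 ≤ κ := zero_le_one.trans hκ
    exact max_le
      ((hx i (by simpa using hi)).trans (mul_le_mul_of_nonneg_left (le_max_left _ _) hκ0))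
      ((le_mul_of_one_le_left ht hκ).trans (mul_le_mul_of_nonneg_left (le_max_right _ _) hκ0))

lemma inv_le_sq_div_sq_sub_one {m α : ℝ} (hm : 1 < m) (hα : (m ^ 2 - 1) / m ^ 2 ≤ α) :
    α⁻¹ ≤ m ^ 2 / (m ^ 2 - 1) := by
  have hpos : 0 < (m ^ 2 - 1) / m ^ 2 := by
    have : 0 < m ^ 2 - 1 := by nlinarith
    positivity
  rw [← inv_div]
  exact inv_anti₀ hpos hα

-- `x` stands for `γ_j²`; the factor `1 / x * x` is `1` except at `x = 0`, where it is `0`.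
lemma div_mul_one_add_two_div_le {m α x : ℝ} (hm : 1 < m) (hα : (m ^ 2 - 1) / m ^ 2 ≤ α)
    (hx : 0 ≤ x) : x / (α * (1 + 2 / (m - 1) * (1 / x) * x)) ≤ (m / (m + 1)) ^ 2 * x := by
  rcases hx.eq_or_lt with rfl | hx
  · simp
  have hm1 : 0 < m - 1 := by linarith
  have hone : 1 + 2 / (m - 1) * (1 / x) * x = (m + 1) / (m - 1) := by
    field_simp
    ring
  rw [hone, div_eq_mul_inv, mul_inv, mul_comm x, inv_div]
  calc α⁻¹ * ((m - 1) / (m + 1)) * x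
      ≤ m ^ 2 / (m ^ 2 - 1) * ((m - 1) / (m + 1)) * x := by
        gcongr
        exact inv_le_sq_div_sq_sub_one hm hα
    _ = (m / (m + 1)) ^ 2 * x := by
        rw [show m ^ 2 - 1 = (m - 1) * (m + 1) by ring]
        field_simp

lemma div_add_one_le_exp (x : ℝ) : x / (x + 1) ≤ Real.exp (-(1 / (x + 1))) := by
  rcases eq_or_ne (x + 1) 0 with h | h
  · rw [h, div_zero]
    positivity
  have := Real.add_one_le_exp (-(1 / (x + 1)))
  have : -(1 / (x + 1)) + 1 = x / (x + 1) := by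
    field_simp
    ring
  linarith

lemma sqrt_sq_div_sq_sub_one_pow_le_exp {m : ℕ} (hm : 2 ≤ m) :
    √((m : ℝ) ^ 2 / ((m : ℝ) ^ 2 - 1)) ^ (m - 1) ≤ Real.exp (1 / (2 * ((m : ℝ) + 1))) := by
  have hm' : (2 : ℝ) ≤ m := by exact_mod_cast hm
  have hsq : 0 < (m : ℝ) ^ 2 - 1 := by nlinarith
  rw [show 1 / (2 * ((m : ℝ) + 1)) = 1 / ((m : ℝ) + 1) / 2 by rw [div_div, mul_comm], Real.exp_half,
    Real.le_sqrt (by positivity) (by positivity), ← pow_mul, mul_comm, pow_mul,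
    Real.sq_sqrt (by positivity)]
  calc ((m : ℝ) ^ 2 / ((m : ℝ) ^ 2 - 1)) ^ (m - 1)
      ≤ Real.exp (1 / ((m : ℝ) ^ 2 - 1)) ^ (m - 1) := by
        gcongr
        have := Real.add_one_le_exp (1 / ((m : ℝ) ^ 2 - 1))
        have : (m : ℝ) ^ 2 / ((m : ℝ) ^ 2 - 1) = 1 / ((m : ℝ) ^ 2 - 1) + 1 := by
          field_simp; ring
        linarith
    _ = Real.exp (1 / ((m : ℝ) + 1)) := by
        rw [← Real.exp_nat_mul]
        congr 1
        rw [Nat.cast_sub (by omega)]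
        field_simp
        ring

lemma div_add_one_mul_sqrt_pow_le_exp {m : ℕ} (hm : 2 ≤ m) :
    (m / ((m : ℝ) + 1)) * √((m : ℝ) ^ 2 / ((m : ℝ) ^ 2 - 1)) ^ (m - 1) ≤
      Real.exp (-1 / (2 * ((m : ℝ) + 1))) := by
  calc (m / ((m : ℝ) + 1)) * √((m : ℝ) ^ 2 / ((m : ℝ) ^ 2 - 1)) ^ (m - 1)
      ≤ Real.exp (-(1 / ((m : ℝ) + 1))) * Real.exp (1 / (2 * ((m : ℝ) + 1))) := by
        gcongr
        · exact div_add_one_le_exp _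
        · exact sqrt_sq_div_sq_sub_one_pow_le_exp hm
    _ = Real.exp (-1 / (2 * ((m : ℝ) + 1))) := by
        rw [← Real.exp_add]
        congr 1
        field_simp
        ring

theorem stmt_11_general {n m : ℕ} (hm : 2 ≤ m) (A : Matrix (Fin n) (Fin m) ℝ) (u : Fin m → ℝ)
    (d l dt lt : Fin m → ℝ) (j : Fin m) (α : ℝ)
    (hpd : (A * Matrix.diagonal d * Aᵀ).PosDef)
    (hpdt : (A * Matrix.diagonal dt * Aᵀ).PosDef)
    (hf : 0 < fval A u d l) (hft : 0 < fval A u dt lt)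
    (hα : ((m : ℝ) ^ 2 - 1) / (m : ℝ) ^ 2 ≤ α)
    (hrel : (1 / fval A u dt lt) • dt =
      α • ((1 / fval A u d l) • d +
        (2 / ((m : ℝ) - 1) * (1 / gamma A u d l j ^ 2)) • (Pi.single j 1 : Fin m → ℝ)))
    (hγτ : tau A u ≤ gamma A u d l j) :
    psi A u dt lt ≤ Real.exp (-1 / (2 * ((m : ℝ) + 1))) * psi A u d l := by
  have hm' : (2 : ℝ) ≤ m := by exact_mod_cast hm
  have hsq : 0 < (m : ℝ) ^ 2 - 1 := by nlinarith
  have hα0 : 0 < α := lt_of_lt_of_le (by positivity) hα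
  have hc : 0 ≤ 2 / ((m : ℝ) - 1) * (1 / gamma A u d l j ^ 2) := by
    have : (0 : ℝ) < m - 1 := by linarith
    positivity
  have hτ : 0 ≤ tau A u := abs_nonneg _
  set κ := √((m : ℝ) ^ 2 / ((m : ℝ) ^ 2 - 1))
  have hκ : 1 ≤ κ := Real.one_le_sqrt.mpr ((one_le_div hsq).mpr (by linarith))
  have hj : gamma A u dt lt j ≤ m / ((m : ℝ) + 1) * gamma A u d l j := by
    rw [← pow_le_pow_iff_left₀ (gamma_nonneg A u dt lt j) (by positivity [gamma_nonneg A u d l j])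
      two_ne_zero, mul_pow, sq_gamma_update_self A u hpd hpdt hf hft hα0 hc hrel]
    exact div_mul_one_add_two_div_le (by linarith) hα (sq_nonneg _)
  have hi (i : Fin m) : gamma A u dt lt i ≤ κ * gamma A u d l i := by
    rw [← pow_le_pow_iff_left₀ (gamma_nonneg A u dt lt i) (by positivity [gamma_nonneg A u d l i])
      two_ne_zero, mul_pow, Real.sq_sqrt (by positivity)]
    exact (sq_gamma_update_le A u hpd hpdt hf hft hα0 hc hrel i).trans <| by
      rw [div_eq_inv_mul]; gcongr; exact inv_le_sq_div_sq_sub_one (by linarith) hα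
  have hψ : 0 ≤ psi A u d l :=
    Finset.prod_nonneg fun i _ => (gamma_nonneg A u d l i).trans (le_max_left _ _)
  calc psi A u dt lt ≤ m / ((m : ℝ) + 1) * κ ^ (m - 1) * psi A u d l := by
        simpa only [psi, Fintype.card_fin] using prod_max_le_mul_pow_mul_prod_max j (by positivity)
          (by positivity) hκ hj (mul_le_mul_of_nonneg_left hγτ (by positivity)) (fun i _ => hi i)
    _ ≤ Real.exp (-1 / (2 * ((m : ℝ) + 1))) * psi A u d l := by
        gcongr
        exact div_add_one_mul_sqrt_pow_le_exp hm

/-- Lemma 4.1 of the paper. Under the stated update relation with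
`α ≥ (m²-1)/m²`, if `γ_j(d,l) ≥ τ(A,u)` then the potential `ψ` decreases by the factor
`exp(-1/(2(m+1)))`. -/
theorem stmt_11 {n m : ℕ} (hm : 2 ≤ m) (A : Matrix (Fin n) (Fin m) ℝ) (u : Fin m → ℝ)
    (d l dt lt : Fin m → ℝ) (j : Fin m) (α : ℝ)
    (hd : 0 ≤ d) (hdt : 0 ≤ dt)
    (hpd : (A * Matrix.diagonal d * Aᵀ).PosDef)
    (hpdt : (A * Matrix.diagonal dt * Aᵀ).PosDef)
    (hf : 0 < fval A u d l) (hft : 0 < fval A u dt lt)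
    (hα : ((m : ℝ) ^ 2 - 1) / (m : ℝ) ^ 2 ≤ α)
    (hrel : (1 / fval A u dt lt) • dt =
      α • ((1 / fval A u d l) • d +
        (2 / ((m : ℝ) - 1) * (1 / gamma A u d l j ^ 2)) • (Pi.single j 1 : Fin m → ℝ)))
    (hγτ : tau A u ≤ gamma A u d l j) :
    psi A u dt lt ≤ Real.exp (-1 / (2 * ((m : ℝ) + 1))) * psi A u d l :=
  stmt_11_general hm A u d l dt lt j α hpd hpdt hf hft hα hrel hγτ
end

section
/- Let d ≥ 0 and l satisfy f(d,l) > 0 with ADAᵀ positive definite, and let d̃ ≥ 0, l̃ satisfy f(d̃,l̃) > 0 with AD̃Aᵀ positive definite, where (1/f(d̃,l̃)) d̃ = α ( (1/f(d,l)) d + (2/(m−1)) (1/γ_j(d,l)²) e_j ) for a scalar α > 0. Then f(d̃,l̃)(AD̃Aᵀ)⁻¹ = (1/α) f(d,l) ( B − (2/(m+1)) (1/(a_jᵀBa_j)) B a_j a_jᵀ B ); consequently γ_j(d̃,l̃)² = (1/α)·((m−1)/(m+1))·γ_j(d,l)², and γ_i(d̃,l̃)² ≤ (1/α)·γ_i(d,l)²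 for every i ≠ j. -/
/-!
With `B = (A D Aᵀ)⁻¹` and `a = a_j`, the relation between `d̃` and `d` says that `d̃` is a positive
multiple of `d + b e_j` with `b = 2 / ((m - 1) aᵀBa)`, so `A D̃ Aᵀ` is a multiple of the rank-one
update `A D Aᵀ + b a aᵀ`. Sherman–Morrison inverts it as `B - t B a aᵀ B` with
`t = b / (1 + b aᵀBa) = 2 / ((m + 1) aᵀBa)`. Since `B` is symmetric, the quadratic form of the update
at `a_i` is `a_iᵀBa_i - t (a_iᵀBa)²`, which equals `(m - 1)/(m + 1) · aᵀBa` for `i = j` and is at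
most `a_iᵀBa_i` in general.
-/

open Matrix

namespace Matrix

theorem IsSymm.dotProduct_sub_smul_vecMulVec_mulVec {ι R : Type*} [Fintype ι] [CommRing R]
    {B : Matrix ι ι R} (hB : B.IsSymm) (a x : ι → R) (t : R) :
    x ⬝ᵥ ((B - t • vecMulVec (B *ᵥ a) (a ᵥ* B)) *ᵥ x) =
      x ⬝ᵥ (B *ᵥ x) - t * (x ⬝ᵥ (B *ᵥ a)) ^ 2 := by
  have hvecMul : a ᵥ* B = B *ᵥ a := by rw [← mulVec_transpose, hB.eq]
  rw [sub_mulVec, smul_mulVec, vecMulVec_mulVec, hvecMul, op_smul_eq_smul, dotProduct_sub,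
    dotProduct_smul, dotProduct_smul, dotProduct_comm (B *ᵥ a) x, smul_eq_mul, smul_eq_mul, sq]

theorem mul_diagonal_add_single_mul_transpose {ι κ R : Type*} [Fintype κ] [DecidableEq κ]
    [CommSemiring R] (A : Matrix ι κ R) (d : κ → R) (j : κ) (r : R) :
    A * diagonal (d + Pi.single j r) * Aᵀ =
      A * diagonal d * Aᵀ + r • vecMulVec (fun k => A k j) (fun k => A k j) := by
  rw [show diagonal (d + Pi.single j r) = diagonal d + diagonal (Pi.single j r) from
    (diagonal_add _ _).symm, Matrix.mul_add, Matrix.add_mul, diagonal_single]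
  congr 1
  ext
  simp [mul_apply, single_apply, vecMulVec_apply, ite_and, mul_comm, mul_left_comm]

section Field

variable {ι K : Type*} [Fintype ι] [DecidableEq ι] [Field K]

theorem inv_smul_eq_inv_smul_inv (k : K) (A : Matrix ι ι K) : (k • A)⁻¹ = k⁻¹ • A⁻¹ := by
  rcases eq_or_ne k 0 with rfl | hk
  · simp
  by_cases hA : IsUnit A.det
  · exact inv_smul' A (Units.mk0 k hk) hA
  · have hkA : ¬IsUnit (k • A).det := by
      simpa [det_smul, hk] using hA
    rw [nonsing_inv_apply_not_isUnit _ hA, nonsing_inv_apply_not_isUnit _ hkA, smul_zero]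

/-- Sherman–Morrison for a symmetric rank-one update, with the coefficient `t = β / (1 + β aᵀM⁻¹a)`
given implicitly so that no division is needed. -/
theorem inv_add_smul_vecMulVec_self {M : Matrix ι ι K} (hM : IsUnit M.det) {a : ι → K}
    {β t : K} (h : t * (1 + β * (a ⬝ᵥ (M⁻¹ *ᵥ a))) = β) :
    (M + β • vecMulVec a a)⁻¹ = M⁻¹ - t • vecMulVec (M⁻¹ *ᵥ a) (a ᵥ* M⁻¹) := by
  refine inv_eq_right_inv ?_
  have hMB : M * M⁻¹ = 1 := mul_nonsing_inv M hM
  calc (M + β • vecMulVec a a) * (M⁻¹ - t • vecMulVec (M⁻¹ *ᵥ a) (a ᵥ* M⁻¹))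
      = 1 + (β - t * (1 + β * (a ⬝ᵥ (M⁻¹ *ᵥ a)))) • vecMulVec a (a ᵥ* M⁻¹) := by
        simp only [add_mul, mul_sub, smul_mul, Matrix.mul_smul, hMB, mul_vecMulVec,
          mulVec_mulVec, one_mulVec, vecMulVec_mul, smul_mulVec, vecMulVec_mulVec,
          op_smul_eq_smul, smul_vecMulVec, smul_smul, ← dotProduct_mulVec]
        module
    _ = 1 := by rw [h, sub_self, zero_smul, add_zero]

theorem smul_inv_mul_diagonal_mul_transpose_of_rescale {κ : Type*} [Fintype κ] [DecidableEq κ]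
    (A : Matrix ι κ K) {d dt : κ → K} {j : κ} {c ct α b : K} (hc : c ≠ 0) (hct : ct ≠ 0)
    (hα : α ≠ 0) (hrel : (1 / ct) • dt = α • ((1 / c) • d + b • (Pi.single j 1 : κ → K))) :
    ct • (A * diagonal dt * Aᵀ)⁻¹ =
      (1 / α) • (c • (A * diagonal d * Aᵀ +
        (c * b) • vecMulVec (fun k => A k j) (fun k => A k j))⁻¹) := by
  have hdt : dt = (ct * α / c) • (d + Pi.single j (c * b)) := by
    ext i
    have hi := congr_fun hrel i
    rcases eq_or_ne i j with rfl | hij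
    · simp only [Pi.smul_apply, Pi.add_apply, smul_eq_mul, Pi.single_eq_same, mul_one] at hi ⊢
      field_simp at hi ⊢
      linear_combination hi
    · simp only [Pi.smul_apply, Pi.add_apply, smul_eq_mul, Pi.single_eq_of_ne hij, mul_zero,
        add_zero] at hi ⊢
      field_simp at hi ⊢
      linear_combination hi
  rw [hdt, diagonal_smul, Matrix.mul_smul, Matrix.smul_mul, mul_diagonal_add_single_mul_transpose,
    inv_smul_eq_inv_smul_inv, smul_smul, smul_smul]
  congr 1
  field_simp

end Field

end Matrix

section Gamma

variable {n m : ℕ} {A : Matrix (Fin n) (Fin m) ℝ} {u : Fin m → ℝ}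

theorem gamma_sq {d l : Fin m → ℝ} (hpd : (A * diagonal d * Aᵀ).PosDef)
    (hf : 0 ≤ fval A u d l) (i : Fin m) :
    gamma A u d l i ^ 2 =
      fval A u d l * ((fun k => A k i) ⬝ᵥ ((A * diagonal d * Aᵀ)⁻¹ *ᵥ fun k => A k i)) := by
  have hq := hpd.inv.posSemidef.dotProduct_mulVec_nonneg (fun k => A k i)
  rw [star_trivial] at hq
  rw [gamma, Real.sq_sqrt (mul_nonneg hf hq)]

theorem gamma_sq_of_fval_smul_inv_eq {d l dt lt : Fin m → ℝ} {α t : ℝ} {a : Fin n → ℝ}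
    (hpd : (A * diagonal d * Aᵀ).PosDef) (hpdt : (A * diagonal dt * Aᵀ).PosDef)
    (hf : 0 ≤ fval A u d l) (hft : 0 ≤ fval A u dt lt)
    (h : fval A u dt lt • (A * diagonal dt * Aᵀ)⁻¹ =
      (1 / α) • (fval A u d l • ((A * diagonal d * Aᵀ)⁻¹ -
        t • vecMulVec ((A * diagonal d * Aᵀ)⁻¹ *ᵥ a) (a ᵥ* (A * diagonal d * Aᵀ)⁻¹))))
    (i : Fin m) :
    gamma A u dt lt i ^ 2 = (1 / α) * (gamma A u d l i ^ 2 -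
      fval A u d l * t * ((fun k => A k i) ⬝ᵥ ((A * diagonal d * Aᵀ)⁻¹ *ᵥ a)) ^ 2) := by
  have hsymm : (A * diagonal d * Aᵀ)⁻¹.IsSymm := by
    rw [IsSymm, ← conjTranspose_eq_transpose_of_trivial]
    exact hpd.inv.isHermitian.eq
  rw [gamma_sq hpdt hft, gamma_sq hpd hf, ← smul_eq_mul (fval A u dt lt), ← dotProduct_smul,
    ← smul_mulVec, h, smul_mulVec, smul_mulVec, dotProduct_smul, dotProduct_smul,
    hsymm.dotProduct_sub_smul_vecMulVec_mulVec, smul_eq_mul, smul_eq_mul]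
  ring

end Gamma

theorem stmt_12_general {n m : ℕ} (hm : 2 ≤ m) (A : Matrix (Fin n) (Fin m) ℝ) (u : Fin m → ℝ)
    (d l dt lt : Fin m → ℝ) (j : Fin m) (α : ℝ)
    (hpd : (A * Matrix.diagonal d * Aᵀ).PosDef)
    (hpdt : (A * Matrix.diagonal dt * Aᵀ).PosDef)
    (hf : 0 < fval A u d l) (hft : 0 < fval A u dt lt)
    (hα : 0 < α)
    (hrel : (1 / fval A u dt lt) • dt =
      α • ((1 / fval A u d l) • d +
        (2 / ((m : ℝ) - 1) * (1 / gamma A u d l j ^ 2)) • (Pi.single j 1 : Fin m → ℝ))) :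
    fval A u dt lt • (A * Matrix.diagonal dt * Aᵀ)⁻¹ =
      (1 / α) • (fval A u d l •
        ((A * Matrix.diagonal d * Aᵀ)⁻¹ -
          (2 / ((m : ℝ) + 1) *
            (1 / ((fun k => A k j) ⬝ᵥ ((A * Matrix.diagonal d * Aᵀ)⁻¹ *ᵥ (fun k => A k j))))) •
            Matrix.vecMulVec ((A * Matrix.diagonal d * Aᵀ)⁻¹ *ᵥ (fun k => A k j))
              (Matrix.vecMul (fun k => A k j) (A * Matrix.diagonal d * Aᵀ)⁻¹))) ∧
    gamma A u dt lt j ^ 2 = (1 / α) * (((m : ℝ) - 1) / ((m : ℝ) + 1)) * gamma A u d l j ^ 2 ∧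
    ∀ i : Fin m, i ≠ j → gamma A u dt lt i ^ 2 ≤ (1 / α) * gamma A u d l i ^ 2 := by
  set c := fval A u d l
  set M := A * diagonal d * Aᵀ
  set a : Fin n → ℝ := fun k => A k j
  set q := a ⬝ᵥ (M⁻¹ *ᵥ a)
  set b := 2 / ((m : ℝ) - 1) * (1 / q)
  set t := 2 / ((m : ℝ) + 1) * (1 / q)
  have hm1 : (m : ℝ) - 1 ≠ 0 := by
    have : (2 : ℝ) ≤ m := by exact_mod_cast hm
    linarith
  have hq : 0 ≤ q := by simpa using hpd.inv.posSemidef.dotProduct_mulVec_nonneg a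
  have hγj : gamma A u d l j ^ 2 = c * q := gamma_sq hpd hf.le j
  have hb : c * (2 / ((m : ℝ) - 1) * (1 / gamma A u d l j ^ 2)) = b := by
    simp only [hγj, b]
    field_simp
  have hcoeff : t * (1 + b * q) = b := by
    rcases eq_or_ne q 0 with h0 | h0
    · simp [b, t, h0]
    · simp only [b, t]
      field_simp
      ring
  have hmain : fval A u dt lt • (A * diagonal dt * Aᵀ)⁻¹ =
      (1 / α) • (c • (M⁻¹ - t • vecMulVec (M⁻¹ *ᵥ a) (a ᵥ* M⁻¹))) := by
    rw [smul_inv_mul_diagonal_mul_transpose_of_rescale A hf.ne' hft.ne' hα.ne' hrel, hb,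
      inv_add_smul_vecMulVec_self (isUnit_iff_ne_zero.mpr hpd.det_pos.ne') hcoeff]
  have hγt := gamma_sq_of_fval_smul_inv_eq hpd hpdt hf.le hft.le hmain
  refine ⟨hmain, ?_, fun i _ => ?_⟩
  · rw [hγt, hγj]
    change 1 / α * (c * q - c * t * q ^ 2) = 1 / α * ((m - 1) / (m + 1)) * (c * q)
    rcases eq_or_ne q 0 with h0 | h0
    · simp [h0]
    · simp only [t]
      field_simp
      ring
  · rw [hγt]
    have ht : 0 ≤ t := by positivity
    gcongr
    exact sub_le_self _ (by positivity)

/-- The scaled-inverse update identity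
`f(d̃,l̃)(AD̃Aᵀ)⁻¹ = (1/α) f(d,l) (B - (2/(m+1)) (1/(a_jᵀBa_j)) B a_j a_jᵀ B)` and the
resulting relations between the semi-widths `γ_i`. -/
theorem stmt_12 {n m : ℕ} (hm : 2 ≤ m) (A : Matrix (Fin n) (Fin m) ℝ) (u : Fin m → ℝ)
    (d l dt lt : Fin m → ℝ) (j : Fin m) (α : ℝ)
    (hd : 0 ≤ d) (hdt : 0 ≤ dt)
    (hpd : (A * Matrix.diagonal d * Aᵀ).PosDef)
    (hpdt : (A * Matrix.diagonal dt * Aᵀ).PosDef)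
    (hf : 0 < fval A u d l) (hft : 0 < fval A u dt lt)
    (hα : 0 < α)
    (hrel : (1 / fval A u dt lt) • dt =
      α • ((1 / fval A u d l) • d +
        (2 / ((m : ℝ) - 1) * (1 / gamma A u d l j ^ 2)) • (Pi.single j 1 : Fin m → ℝ))) :
    fval A u dt lt • (A * Matrix.diagonal dt * Aᵀ)⁻¹ =
      (1 / α) • (fval A u d l •
        ((A * Matrix.diagonal d * Aᵀ)⁻¹ -
          (2 / ((m : ℝ) + 1) *
            (1 / ((fun k => A k j) ⬝ᵥ ((A * Matrix.diagonal d * Aᵀ)⁻¹ *ᵥ (fun k => A k j))))) •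
            Matrix.vecMulVec ((A * Matrix.diagonal d * Aᵀ)⁻¹ *ᵥ (fun k => A k j))
              (Matrix.vecMul (fun k => A k j) (A * Matrix.diagonal d * Aᵀ)⁻¹))) ∧
    gamma A u dt lt j ^ 2 = (1 / α) * (((m : ℝ) - 1) / ((m : ℝ) + 1)) * gamma A u d l j ^ 2 ∧
    ∀ i : Fin m, i ≠ j → gamma A u dt lt i ^ 2 ≤ (1 / α) * gamma A u d l i ^ 2 :=
  stmt_12_general hm A u d l dt lt j α hpd hpdt hf hft hα hrel
end

section
/- For every integer m ≥ 2, (m/(m+1)) · (m²/(m²−1))^{(m−1)/2} ≤ exp(−1/(2(m+1))). -/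
/-! Both factors are bounded with `1 + t ≤ exp t`: `m/(m+1) = 1 - 1/(m+1) ≤ exp(-1/(m+1))` and
`m²/(m²-1) = 1 + 1/(m²-1) ≤ exp(1/(m²-1))`, the latter raised to the power `(m-1)/2` giving
`exp(1/(2(m+1)))`. The exponents add up to `-1/(2(m+1))`. -/

open Real

lemma div_add_one_le_exp_neg {x : ℝ} (hx : x + 1 ≠ 0) : x / (x + 1) ≤ exp (-1 / (x + 1)) := by
  have h := add_one_le_exp (-1 / (x + 1))
  rwa [show -1 / (x + 1) + 1 = x / (x + 1) by field_simp; ring] at h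

lemma one_add_inv_rpow_le_exp {a t : ℝ} (ha : 0 ≤ a) (ht : 0 ≤ t) :
    (1 + a⁻¹) ^ t ≤ exp (t / a) := by
  calc (1 + a⁻¹) ^ t ≤ exp a⁻¹ ^ t := by
        gcongr
        linarith [add_one_le_exp a⁻¹]
    _ = exp (t / a) := by rw [← exp_mul, inv_mul_eq_div]

/-- For every integer `m ≥ 2`,
`(m/(m+1)) · (m²/(m²-1))^((m-1)/2) ≤ exp(-1/(2(m+1)))`. -/
theorem stmt_13 (m : ℕ) (hm : 2 ≤ m) :
    ((m : ℝ) / ((m : ℝ) + 1)) *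
        ((m : ℝ) ^ 2 / ((m : ℝ) ^ 2 - 1)) ^ (((m : ℝ) - 1) / 2) ≤
      Real.exp (-1 / (2 * ((m : ℝ) + 1))) := by
  have hx : (2 : ℝ) ≤ m := by exact_mod_cast hm
  have hsq : (0 : ℝ) < (m : ℝ) ^ 2 - 1 := by nlinarith
  have hbase : (m : ℝ) ^ 2 / ((m : ℝ) ^ 2 - 1) = 1 + ((m : ℝ) ^ 2 - 1)⁻¹ := by
    field_simp; ring
  calc ((m : ℝ) / ((m : ℝ) + 1)) * ((m : ℝ) ^ 2 / ((m : ℝ) ^ 2 - 1)) ^ (((m : ℝ) - 1) / 2)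
      ≤ exp (-1 / ((m : ℝ) + 1)) * exp ((((m : ℝ) - 1) / 2) / ((m : ℝ) ^ 2 - 1)) := by
        rw [hbase]
        gcongr
        · exact div_add_one_le_exp_neg (by positivity)
        · exact one_add_inv_rpow_le_exp hsq.le (by linarith)
    _ = exp (-1 / (2 * ((m : ℝ) + 1))) := by
        rw [← exp_add]
        congr 1
        have hm1 : (m : ℝ) - 1 ≠ 0 := by linarith
        rw [show (m : ℝ) ^ 2 - 1 = ((m : ℝ) - 1) * ((m : ℝ) + 1) by ring]
        field_simp
        ring
end

section
/- Suppose −1 ≤ α ≤ β ≤ 1 with α > −1 or β < 1, and 1 + nαβ ≥ 0. Let Ē_{αβ} := { y ∈ E : −a_jᵀy ≤ −a_jᵀȳ + αγ_j or −a_jᵀy ≥ −a_jᵀȳ + βγ_j }, where E := {y ∈ ℝⁿ : (y−ȳ)ᵀ(ADAᵀ)(y−ȳ) ≤ 1} and γ_j := sqrt(a_jᵀBa_j). Then every ellipsoid (image of the closed Euclidean unit ball of ℝⁿ under an invertible affine map) containing Ē_{αβ} has Lebesgue volume at least that of E; that is, E is a minimum-volume ellipsoid containing Ē_{αβ}. 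-/
/-!
Write `E = ȳ + P(B)`, `B` the unit ball, with `Pᵀ (A D Aᵀ) P = 1` and `Pᵀ a_j = -γ_j e₀` (the
inverse square root of `A D Aᵀ` times a reflection). Then `Ē_{αβ}` contains `ȳ + P(C)`, where `C`
consists of the polar caps `{v₀ ≤ a}` and `{v₀ ≥ b}` of the unit sphere, for any `a ≤ α` and
`β ≤ b`; the hypothesis `1 + nαβ ≥ 0` allows `n a b = -1`. If an ellipsoid `z + N(B)` contains
`ȳ + P(C)`, then `G = N⁻¹P` maps `C` into `B` up to a translation. Averaging over the test vectors
`t e₀ ± √(1 - t²) eᵢ` with `t = a, b` and summing over `i` gives `tr(GᵀG) ≤ n`, so AM-GM on the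
eigenvalues of `GᵀG` gives `|det G| ≤ 1`, that is, `vol E ≤ vol (z + N(B))`.
-/

open Matrix MeasureTheory

/-- An ellipsoid in `ℝⁿ` is the image of the closed Euclidean unit ball under an
invertible affine map. -/
def IsEllipsoid {n : ℕ} (S : Set (Fin n → ℝ)) : Prop :=
  ∃ (M : Matrix (Fin n) (Fin n) ℝ) (c : Fin n → ℝ),
    IsUnit M ∧ S = (fun x => M *ᵥ x + c) '' {x : Fin n → ℝ | x ⬝ᵥ x ≤ 1}

theorem Real.prod_le_one_of_sum_le_card {ι : Type*} [Fintype ι] [Nonempty ι] {z : ι → ℝ}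
    (hz : ∀ i, 0 ≤ z i) (hsum : ∑ i, z i ≤ Fintype.card ι) : ∏ i, z i ≤ 1 := by
  have hcard : (0 : ℝ) < Fintype.card ι := by exact_mod_cast Fintype.card_pos
  have amgm := Real.geom_mean_le_arith_mean Finset.univ 1 z (fun _ _ => zero_le_one)
    (by simpa using hcard) (fun i _ => hz i)
  simp only [Pi.one_apply, Real.rpow_one, one_mul, Finset.sum_const, Finset.card_univ,
    nsmul_eq_mul, mul_one] at amgm
  have hprod := amgm.trans ((div_le_one hcard).2 hsum)
  rwa [Real.rpow_inv_le_iff_of_pos (Finset.prod_nonneg fun i _ => hz i) zero_le_one hcard,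
    Real.one_rpow] at hprod

theorem Matrix.abs_det_le_one_of_trace_transpose_mul_self_le {ι : Type*} [Fintype ι]
    [DecidableEq ι] [Nonempty ι] (G : Matrix ι ι ℝ) (h : (Gᵀ * G).trace ≤ Fintype.card ι) :
    |G.det| ≤ 1 := by
  have hpsd : (Gᵀ * G).PosSemidef := posSemidef_conjTranspose_mul_self G
  have hprod : (Gᵀ * G).det ≤ 1 := by
    rw [hpsd.isHermitian.det_eq_prod_eigenvalues]
    rw [hpsd.isHermitian.trace_eq_sum_eigenvalues] at h
    exact_mod_cast Real.prod_le_one_of_sum_le_card hpsd.eigenvalues_nonneg (by simpa using h)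
  rw [det_mul, det_transpose, ← sq, ← sq_abs] at hprod
  exact (sq_le_one_iff₀ (abs_nonneg _)).1 hprod

theorem Matrix.exists_transpose_mul_self_eq_one_mulVec_eq {ι : Type*} [Fintype ι]
    [DecidableEq ι] {c e : ι → ℝ} (h : c ⬝ᵥ c = e ⬝ᵥ e) :
    ∃ R : Matrix ι ι ℝ, Rᵀ * R = 1 ∧ R *ᵥ e = c := by
  set b := (EuclideanSpace.basisFun ι ℝ).toBasis
  set f := (ℝ ∙ (WithLp.toLp 2 e - WithLp.toLp 2 c))ᗮ.reflection
  have hf : f (WithLp.toLp 2 e) = WithLp.toLp 2 c := by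
    apply Submodule.reflection_sub
    rw [← sq_eq_sq₀ (norm_nonneg _) (norm_nonneg _), EuclideanSpace.norm_sq_eq,
      EuclideanSpace.norm_sq_eq]
    simpa [dotProduct, sq] using h.symm
  refine ⟨LinearMap.toMatrix b b f.toLinearEquiv.toLinearMap, ?_, ?_⟩
  · have := f.toMatrix_mem_unitaryGroup (EuclideanSpace.basisFun ι ℝ) (EuclideanSpace.basisFun ι ℝ)
    rwa [mem_unitaryGroup_iff', star_eq_conjTranspose, conjTranspose_eq_transpose_of_trivial]
      at this
  · have h := LinearMap.toMatrix_mulVec_repr b b f.toLinearEquiv.toLinearMap (WithLp.toLp 2 e)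
    rw [LinearEquiv.coe_coe, LinearIsometryEquiv.coe_toLinearEquiv, hf] at h
    exact h

open scoped MatrixOrder in
theorem Matrix.PosDef.exists_transpose_mul_mul_eq_one_and_transpose_mulVec_eq {ι : Type*}
    [Fintype ι] [DecidableEq ι] {M : Matrix ι ι ℝ} (hM : M.PosDef) (a : ι → ℝ) (i : ι) :
    ∃ P : Matrix ι ι ℝ, IsUnit P ∧ Pᵀ * M * P = 1 ∧
      Pᵀ *ᵥ a = √(a ⬝ᵥ (M⁻¹ *ᵥ a)) • Pi.single i 1 := by
  set W := CFC.sqrt M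
  have hWW : W * W = M := CFC.sqrt_mul_sqrt_self M hM.posSemidef.nonneg
  have hWT : Wᵀ = W := (CFC.sqrt_nonneg M).posSemidef.1
  have hW : IsUnit W := (CFC.isUnit_sqrt_iff M hM.posSemidef.nonneg).2 hM.isUnit
  have hWinvT : (W⁻¹)ᵀ = W⁻¹ := by rw [transpose_nonsing_inv, hWT]
  set x := W⁻¹ *ᵥ a
  have hx : a ⬝ᵥ (M⁻¹ *ᵥ a) = x ⬝ᵥ x := by
    rw [← hWW, mul_inv_rev, ← mulVec_mulVec, dotProduct_mulVec, ← mulVec_transpose, hWinvT]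
  have hxx : 0 ≤ x ⬝ᵥ x := by simpa using dotProduct_self_star_nonneg x
  obtain ⟨R, hRR, hRx⟩ := exists_transpose_mul_self_eq_one_mulVec_eq
    (c := x) (e := √(x ⬝ᵥ x) • Pi.single i 1) (by simp [Real.mul_self_sqrt hxx])
  refine ⟨W⁻¹ * R, (isUnit_nonsing_inv_iff.2 hW).mul (.of_mul_eq_one_right Rᵀ hRR), ?_, ?_⟩
  · have hWdet := (isUnit_iff_isUnit_det W).1 hW
    calc (W⁻¹ * R)ᵀ * M * (W⁻¹ * R) = Rᵀ * ((W⁻¹ * W) * (W * W⁻¹)) * R := by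
          simp only [transpose_mul, hWinvT, ← hWW, mul_assoc]
      _ = 1 := by rw [nonsing_inv_mul W hWdet, mul_nonsing_inv W hWdet, mul_one, mul_one, hRR]
  · rw [hx, transpose_mul, hWinvT, ← mulVec_mulVec]
    change Rᵀ *ᵥ x = _
    conv_lhs => rw [← hRx]
    rw [mulVec_mulVec, hRR, one_mulVec]

theorem setOf_sub_dotProduct_mulVec_sub_le_one_eq_image {ι : Type*} [Fintype ι] [DecidableEq ι]
    {M P : Matrix ι ι ℝ} (hP : IsUnit P) (hPMP : Pᵀ * M * P = 1) (c : ι → ℝ) :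
    {y | (y - c) ⬝ᵥ (M *ᵥ (y - c)) ≤ 1} = (fun x => P *ᵥ x + c) '' {x | x ⬝ᵥ x ≤ 1} := by
  have hquad (x : ι → ℝ) : (P *ᵥ x) ⬝ᵥ (M *ᵥ (P *ᵥ x)) = x ⬝ᵥ x := by
    rw [mulVec_mulVec, dotProduct_mulVec, vecMul_mulVec, ← mul_assoc, hPMP, vecMul_one]
  have hPinv (v : ι → ℝ) : P *ᵥ (P⁻¹ *ᵥ v) = v := by
    rw [mulVec_mulVec, mul_nonsing_inv P ((isUnit_iff_isUnit_det P).1 hP), one_mulVec]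
  ext y
  constructor
  · intro hy
    refine ⟨P⁻¹ *ᵥ (y - c), ?_, by simp [hPinv]⟩
    rw [Set.mem_ofPred_eq, ← hquad, hPinv]
    exact hy
  · rintro ⟨x, hx, rfl⟩
    rwa [Set.mem_ofPred_eq, add_sub_cancel_right, hquad]

theorem volume_image_mulVec_add {ι : Type*} [Fintype ι] [DecidableEq ι]
    (P : Matrix ι ι ℝ) (c : ι → ℝ) (s : Set (ι → ℝ)) :
    volume ((fun x => P *ᵥ x + c) '' s) = ENNReal.ofReal |P.det| * volume s := by
  rw [show (fun x => P *ᵥ x + c) '' s = (· + c) '' (toLin' P '' s) by rw [Set.image_image]; rfl,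
    Set.image_add_right, measure_preimage_add_right, Measure.addHaar_image_linearMap,
    LinearMap.det_toLin']

def MapsCapsToBall {n : ℕ} (G : Matrix (Fin (n + 1)) (Fin (n + 1)) ℝ) (q : Fin (n + 1) → ℝ)
    (a b : ℝ) : Prop :=
  ∀ v : Fin (n + 1) → ℝ, v ⬝ᵥ v = 1 → (v 0 ≤ a ∨ b ≤ v 0) → (G *ᵥ v + q) ⬝ᵥ (G *ᵥ v + q) ≤ 1

namespace MapsCapsToBall

variable {n : ℕ} {G : Matrix (Fin (n + 1)) (Fin (n + 1)) ℝ} {q : Fin (n + 1) → ℝ} {a b : ℝ}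

theorem add_dotProduct_mulVec_le (h : MapsCapsToBall G q a b) {t : ℝ} (ht : t ≤ a ∨ b ≤ t)
    {w : Fin (n + 1) → ℝ} (hw0 : w 0 = 0) (hw : w ⬝ᵥ w = 1 - t ^ 2) :
    (t • (G *ᵥ Pi.single 0 1) + q) ⬝ᵥ (t • (G *ᵥ Pi.single 0 1) + q) +
      (G *ᵥ w) ⬝ᵥ (G *ᵥ w) ≤ 1 := by
  have parallelogram (x y : Fin (n + 1) → ℝ) :
      (x + y) ⬝ᵥ (x + y) + (x - y) ⬝ᵥ (x - y) = 2 * (x ⬝ᵥ x) + 2 * (y ⬝ᵥ y) := by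
    simp only [add_dotProduct, dotProduct_add, sub_dotProduct, dotProduct_sub, dotProduct_comm y x]
    ring
  have hunit (s : ℝ) (hs : s ^ 2 = 1) :
      (t • Pi.single 0 1 + s • w) ⬝ᵥ (t • Pi.single 0 1 + s • w) = 1 := by
    simp only [add_dotProduct, dotProduct_add, smul_dotProduct, dotProduct_smul, single_dotProduct,
      dotProduct_single, Pi.add_apply, Pi.smul_apply, Pi.single_eq_same, smul_eq_mul, mul_one,
      hw0, hw, mul_zero, add_zero, zero_add]
    linear_combination (1 - t ^ 2) * hs
  have hmap (s : ℝ) : G *ᵥ (t • Pi.single 0 1 + s • w) + q =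
      (t • (G *ᵥ Pi.single 0 1) + q) + s • (G *ᵥ w) := by
    rw [mulVec_add, mulVec_smul, mulVec_smul]
    abel
  have hplus := h _ (hunit 1 (one_pow 2)) (by simpa [hw0] using ht)
  have hminus := h _ (hunit (-1) (by norm_num)) (by simpa [hw0] using ht)
  rw [hmap, one_smul] at hplus
  rw [hmap, neg_one_smul, ← sub_eq_add_neg] at hminus
  linarith [parallelogram (t • (G *ᵥ Pi.single 0 1) + q) (G *ᵥ w)]

theorem dotProduct_mulVec_single_le (h : MapsCapsToBall G q a b) (ha : -1 ≤ a) (ha0 : a < 0)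
    (hb0 : 0 < b) (hb : b ≤ 1) (hab : (n + 1) * (a * b) = -1) (i : Fin n) :
    (G *ᵥ Pi.single 0 1) ⬝ᵥ (G *ᵥ Pi.single 0 1) +
      n * ((G *ᵥ Pi.single i.succ 1) ⬝ᵥ (G *ᵥ Pi.single i.succ 1)) ≤ n + 1 := by
  set X := (G *ᵥ Pi.single 0 1) ⬝ᵥ (G *ᵥ Pi.single 0 1) with hX
  set Y := (G *ᵥ Pi.single i.succ 1) ⬝ᵥ (G *ᵥ Pi.single i.succ 1) with hY
  set p := (G *ᵥ Pi.single 0 1) ⬝ᵥ q with hp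
  have hQ : 0 ≤ q ⬝ᵥ q := by simpa using dotProduct_self_star_nonneg q
  have height (t : ℝ) (ht : t ≤ a ∨ b ≤ t) (ht1 : t ^ 2 ≤ 1) :
      t ^ 2 * X + 2 * t * p + q ⬝ᵥ q + (1 - t ^ 2) * Y ≤ 1 := by
    have hs := Real.mul_self_sqrt (sub_nonneg.2 ht1)
    have := h.add_dotProduct_mulVec_le ht (w := √(1 - t ^ 2) • Pi.single i.succ 1)
      (by simp [(Fin.succ_ne_zero i).symm]) (by simp [hs])
    simp only [mulVec_smul, add_dotProduct, dotProduct_add, smul_dotProduct, dotProduct_smul,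
      smul_eq_mul, dotProduct_comm q, ← hX, ← hY, ← hp] at this
    linear_combination this - Y * hs
  have Ja := height a (.inl le_rfl) (by nlinarith)
  have Jb := height b (.inr le_rfl) (by nlinarith)
  -- `b • Ja - a • Jb` eliminates the cross term `p`
  have hcomb : (b - a) * (X + n * Y + (n + 1) * q ⬝ᵥ q - (n + 1)) ≤ 0 := by
    have h1 := mul_le_mul_of_nonneg_left Ja hb0.le
    have h2 := mul_le_mul_of_nonneg_left Jb (neg_nonneg.2 ha0.le)
    have := mul_le_mul_of_nonneg_left (add_le_add h1 h2) (by positivity : (0 : ℝ) ≤ n + 1)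
    linear_combination this - ((a - b) * X + (b - a) * Y) * hab
  nlinarith [nonpos_of_mul_nonpos_right hcomb (by linarith)]

theorem trace_transpose_mul_self_le (h : MapsCapsToBall G q a b) (ha : -1 ≤ a) (ha0 : a < 0)
    (hb0 : 0 < b) (hb : b ≤ 1) (hab : (n + 1) * (a * b) = -1) :
    (Gᵀ * G).trace ≤ n + 1 := by
  have htrace : (Gᵀ * G).trace = ∑ i, (G *ᵥ Pi.single i 1) ⬝ᵥ (G *ᵥ Pi.single i 1) := by
    simp [trace, mul_apply, dotProduct]
  rw [htrace, Fin.sum_univ_succ]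
  obtain rfl | hn := n.eq_zero_or_pos
  · -- in dimension one the caps are the two poles `±e₀`
    have hplus := h.add_dotProduct_mulVec_le (t := 1) (.inr hb) (w := 0) rfl (by simp)
    have hminus := h.add_dotProduct_mulVec_le (t := -1) (.inl ha) (w := 0) rfl (by simp)
    have hQ : 0 ≤ q ⬝ᵥ q := by simpa using dotProduct_self_star_nonneg q
    simp only [add_dotProduct, dotProduct_add, one_smul, neg_smul, neg_dotProduct, dotProduct_neg,
      mulVec_zero, dotProduct_zero, dotProduct_comm q] at hplus hminus
    simp only [Finset.univ_eq_empty, Finset.sum_empty]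
    linarith
  · have hcols := Finset.sum_le_sum fun i (_ : i ∈ Finset.univ) =>
      h.dotProduct_mulVec_single_le ha ha0 hb0 hb hab i
    simp only [Finset.sum_add_distrib, ← Finset.mul_sum, Finset.sum_const, Finset.card_univ,
      Fintype.card_fin, nsmul_eq_mul] at hcols
    have hn' : (0 : ℝ) < n := by exact_mod_cast hn
    nlinarith

end MapsCapsToBall

theorem exists_cap_heights {k α β : ℝ} (hk : 1 ≤ k) (hα : -1 ≤ α) (hβ : β ≤ 1)
    (hkαβ : 0 ≤ 1 + k * α * β) :
    ∃ a b : ℝ, -1 ≤ a ∧ a < 0 ∧ 0 < b ∧ b ≤ 1 ∧ a ≤ α ∧ β ≤ b ∧ k * (a * b) = -1 := by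
  have hk0 : 0 < k := by linarith
  rcases le_or_gt α (-1 / k) with hαk | hαk
  · have hkα : k * α ≤ -1 := by rwa [le_div_iff₀ hk0, mul_comm] at hαk
    have hα0 : α < 0 := by nlinarith
    refine ⟨α, -1 / (k * α), hα, hα0, ?_, ?_, le_rfl, ?_, ?_⟩
    · exact div_pos_of_neg_of_neg (by norm_num) (by linarith)
    · rw [div_le_one_of_neg (by linarith)]
      linarith
    · rw [le_div_iff_of_neg (by linarith)]
      linarith
    · field_simp [hα0.ne]
  · refine ⟨-1 / k, 1, ?_, by simpa [neg_div] using hk0, one_pos, le_rfl, hαk.le, hβ, by field_simp⟩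
    rw [le_div_iff₀ hk0]
    linarith

theorem volume_image_le_of_caps_subset {n : ℕ} {P N : Matrix (Fin (n + 1)) (Fin (n + 1)) ℝ}
    (hN : IsUnit N) (c z : Fin (n + 1) → ℝ) {a b : ℝ} (ha : -1 ≤ a) (ha0 : a < 0)
    (hb0 : 0 < b) (hb : b ≤ 1) (hab : (n + 1) * (a * b) = -1)
    (hsub : ∀ v : Fin (n + 1) → ℝ, v ⬝ᵥ v = 1 → (v 0 ≤ a ∨ b ≤ v 0) →
      P *ᵥ v + c ∈ (fun x => N *ᵥ x + z) '' {x | x ⬝ᵥ x ≤ 1}) :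
    volume ((fun x => P *ᵥ x + c) '' {x | x ⬝ᵥ x ≤ 1}) ≤
      volume ((fun x => N *ᵥ x + z) '' {x | x ⬝ᵥ x ≤ 1}) := by
  have hNdet := (isUnit_iff_isUnit_det N).1 hN
  have hmaps : MapsCapsToBall (N⁻¹ * P) (N⁻¹ *ᵥ (c - z)) a b := by
    intro v hv hcap
    obtain ⟨x, hx, hxv : N *ᵥ x + z = P *ᵥ v + c⟩ := hsub v hv hcap
    have : (N⁻¹ * P) *ᵥ v + N⁻¹ *ᵥ (c - z) = x := by
      rw [← mulVec_mulVec, ← mulVec_add, ← add_sub_assoc, ← hxv, add_sub_cancel_right,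
        mulVec_mulVec, nonsing_inv_mul N hNdet, one_mulVec]
    rwa [this]
  have hdet := abs_det_le_one_of_trace_transpose_mul_self_le (N⁻¹ * P)
    (by simpa using hmaps.trace_transpose_mul_self_le ha ha0 hb0 hb hab)
  rw [det_mul, det_nonsing_inv, Ring.inverse_eq_inv', abs_mul, abs_inv,
    inv_mul_le_iff₀ (abs_pos.2 hNdet.ne_zero), mul_one] at hdet
  rw [volume_image_mulVec_add, volume_image_mulVec_add]
  gcongr

theorem stmt_16_general {n m : ℕ} (A : Matrix (Fin n) (Fin m) ℝ) (d : Fin m → ℝ)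
    (hpd : (A * Matrix.diagonal d * Aᵀ).PosDef)
    (ybar : Fin n → ℝ)
    (j : Fin m) (γj : ℝ)
    (hγj : γj = Real.sqrt
      ((fun k => A k j) ⬝ᵥ ((A * Matrix.diagonal d * Aᵀ)⁻¹ *ᵥ (fun k => A k j))))
    (α β : ℝ) (hα : -1 ≤ α) (hβ : β ≤ 1)
    (hnαβ : 0 ≤ 1 + (n : ℝ) * α * β)
    (E Ebar : Set (Fin n → ℝ))
    (hE : E = {y : Fin n → ℝ |
      (y - ybar) ⬝ᵥ ((A * Matrix.diagonal d * Aᵀ) *ᵥ (y - ybar)) ≤ 1})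
    (hEbar : Ebar = {y ∈ E |
      -((fun k => A k j) ⬝ᵥ y) ≤ -((fun k => A k j) ⬝ᵥ ybar) + α * γj ∨
      -((fun k => A k j) ⬝ᵥ y) ≥ -((fun k => A k j) ⬝ᵥ ybar) + β * γj}) :
    ∀ F : Set (Fin n → ℝ), IsEllipsoid F → Ebar ⊆ F → volume E ≤ volume F := by
  rintro F ⟨N, z, hN, rfl⟩ hsub
  cases n with
  | zero =>
    exact measure_mono fun y _ => ⟨0, by simp [dotProduct], Subsingleton.elim _ _⟩
  | succ n =>
    set aj : Fin (n + 1) → ℝ := fun k => A k j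
    obtain ⟨P, hP, hPMP, hPa⟩ :=
      hpd.exists_transpose_mul_mul_eq_one_and_transpose_mulVec_eq (-aj) 0
    have hPaj : Pᵀ *ᵥ aj = -(γj • Pi.single 0 1) := by
      rw [← neg_neg (Pᵀ *ᵥ aj), ← mulVec_neg, hPa, hγj, mulVec_neg, neg_dotProduct,
        dotProduct_neg, neg_neg]
    have haP (v : Fin (n + 1) → ℝ) : aj ⬝ᵥ (P *ᵥ v) = -(γj * v 0) := by
      rw [dotProduct_mulVec, ← mulVec_transpose, hPaj]
      simp
    obtain ⟨a, b, ha, ha0, hb0, hb, haα, hβb, hab⟩ :=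
      exists_cap_heights (k := n + 1) (by simp) hα hβ (by exact_mod_cast hnαβ)
    have hEimg := setOf_sub_dotProduct_mulVec_sub_le_one_eq_image hP hPMP ybar
    subst hE hEbar
    rw [hEimg]
    refine volume_image_le_of_caps_subset hN ybar z ha ha0 hb0 hb hab fun v hv hcap => hsub ?_
    refine ⟨hEimg ▸ ⟨v, hv.le, rfl⟩, ?_⟩
    have hγ : 0 ≤ γj := hγj ▸ Real.sqrt_nonneg _
    rw [dotProduct_add, haP]
    rcases hcap with hva | hbv
    · exact .inl (by nlinarith)
    · exact .inr (by nlinarith)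

/-- first case of Theorem 5.2 of the paper. If `-1 ≤ α ≤ β ≤ 1`
(not both extreme) and `1 + nαβ ≥ 0`, then `E` itself is a minimum-volume ellipsoid
containing the two end pieces `Ē_{αβ}` of `E` cut off by the slab
`α γ_j ≤ -a_jᵀ(y - ȳ) ≤ β γ_j`. -/
theorem stmt_16 {n m : ℕ} (A : Matrix (Fin n) (Fin m) ℝ) (u l d : Fin m → ℝ)
    (hA : ∀ i : Fin m, (fun k => A k i) ≠ 0)
    (hd : 0 ≤ d)
    (hpd : (A * Matrix.diagonal d * Aᵀ).PosDef)
    (ybar : Fin n → ℝ)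
    (hybar : ybar =
      (A * Matrix.diagonal d * Aᵀ)⁻¹ *ᵥ (A *ᵥ (Matrix.diagonal d *ᵥ ((u + l) / 2))))
    (hf : fval A u d l = 1)
    (j : Fin m) (γj : ℝ)
    (hγj : γj = Real.sqrt
      ((fun k => A k j) ⬝ᵥ ((A * Matrix.diagonal d * Aᵀ)⁻¹ *ᵥ (fun k => A k j))))
    (α β : ℝ) (hα : -1 ≤ α) (hαβ : α ≤ β) (hβ : β ≤ 1)
    (hstrict : -1 < α ∨ β < 1)
    (hnαβ : 0 ≤ 1 + (n : ℝ) * α * β)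
    (E Ebar : Set (Fin n → ℝ))
    (hE : E = {y : Fin n → ℝ |
      (y - ybar) ⬝ᵥ ((A * Matrix.diagonal d * Aᵀ) *ᵥ (y - ybar)) ≤ 1})
    (hEbar : Ebar = {y ∈ E |
      -((fun k => A k j) ⬝ᵥ y) ≤ -((fun k => A k j) ⬝ᵥ ybar) + α * γj ∨
      -((fun k => A k j) ⬝ᵥ y) ≥ -((fun k => A k j) ⬝ᵥ ybar) + β * γj}) :
    ∀ F : Set (Fin n → ℝ), IsEllipsoid F → Ebar ⊆ F → volume E ≤ volume F :=
  stmt_16_general A d hpd ybar j γj hγj α β hα hβ hnαβ E Ebar hE hEbar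
end

section
/- Suppose d ≥ 0 with ADAᵀ positive definite, the center ȳ := (ADAᵀ)⁻¹ADr satisfies a_jᵀȳ = u_j where d_j > 0, and l̃_j satisfies l_j < l̃_j < u_j. Define μ := ((l̃_j − l_j)/(u_j − l̃_j)) d_j, d̃ := d + μ e_j, and l̃ := l + (l̃_j − l_j) e_j. Then AD̃Aᵀ is positive definite, the center of E(d̃, l̃) is again ȳ (i.e., (AD̃Aᵀ)⁻¹AD̃r̃ = ȳ, where r̃ := (u+l̃)/2 and D̃ := Diag(d̃)), and f(d̃, l̃) = f(d, l); in particular, since d̃ ≥ d with d̃_j > d_j, the move from (d,l) to (d̃,l̃) is a Pareto-improving step. -/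
open Matrix

lemma Matrix.diagonal_add_diagonal {κ R : Type*} [DecidableEq κ] [AddZeroClass R]
    (d c : κ → R) : diagonal d + diagonal c = diagonal (d + c) :=
  diagonal_add d c

section Center

variable {ι κ : Type*} [Fintype ι] [Fintype κ] [DecidableEq κ]

noncomputable def ellipsoidCenter [DecidableEq ι] (A : Matrix ι κ ℝ) (d r : κ → ℝ) : ι → ℝ :=
  (A * diagonal d * Aᵀ)⁻¹ *ᵥ (A *ᵥ (diagonal d *ᵥ r))

lemma Matrix.PosDef.mul_diagonal_add_mul_transpose {A : Matrix ι κ ℝ} {d c : κ → ℝ}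
    (hpd : (A * diagonal d * Aᵀ).PosDef) (hc : 0 ≤ c) :
    (A * diagonal (d + c) * Aᵀ).PosDef := by
  rw [← diagonal_add_diagonal, Matrix.mul_add, Matrix.add_mul]
  refine hpd.add_posSemidef ?_
  rw [← conjTranspose_eq_transpose_of_trivial]
  exact (posSemidef_diagonal_iff.mpr hc).mul_mul_conjTranspose_same A

lemma mulVec_ellipsoidCenter [DecidableEq ι] {A : Matrix ι κ ℝ} {d : κ → ℝ}
    (hpd : (A * diagonal d * Aᵀ).PosDef) (r : κ → ℝ) :
    (A * diagonal d * Aᵀ) *ᵥ ellipsoidCenter A d r = A *ᵥ (diagonal d *ᵥ r) := by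
  have := hpd.isUnit.invertible
  rw [ellipsoidCenter, mulVec_mulVec, mul_inv_of_invertible, one_mulVec]

lemma ellipsoidCenter_eq_of_mulVec [DecidableEq ι] {A : Matrix ι κ ℝ} {d r : κ → ℝ}
    {y : ι → ℝ} (hpd : (A * diagonal d * Aᵀ).PosDef)
    (hy : (A * diagonal d * Aᵀ) *ᵥ y = A *ᵥ (diagonal d *ᵥ r)) :
    ellipsoidCenter A d r = y := by
  have := hpd.isUnit.invertible
  exact inv_mulVec_eq_vec hy.symm

lemma mul_diagonal_add_mul_transpose_mulVec {R : Type*} [CommRing R] {A : Matrix ι κ R}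
    {d c r r' : κ → R} {y : ι → R}
    (hy : (A * diagonal d * Aᵀ) *ᵥ y = A *ᵥ (diagonal d *ᵥ r))
    (hr : diagonal (d + c) *ᵥ r' = diagonal d *ᵥ r + diagonal c *ᵥ (Aᵀ *ᵥ y)) :
    (A * diagonal (d + c) * Aᵀ) *ᵥ y = A *ᵥ (diagonal (d + c) *ᵥ r') := by
  rw [hr, ← diagonal_add_diagonal, Matrix.mul_add, Matrix.add_mul, add_mulVec, hy, mulVec_add]
  simp only [mulVec_mulVec, Matrix.mul_assoc]

end Center

lemma fval_eq_sum {n m : ℕ} (A : Matrix (Fin n) (Fin m) ℝ) (u d l : Fin m → ℝ) :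
    fval A u d l = ∑ k, d k *
      ((u k + l k) / 2 * (Aᵀ *ᵥ ellipsoidCenter A d ((u + l) / 2)) k - u k * l k) := by
  simp only [fval, ellipsoidCenter, dotProduct, mulVec_diagonal, ← Finset.sum_sub_distrib,
    ← Finset.sum_add_distrib]
  refine Finset.sum_congr rfl fun k _ => ?_
  simp only [Pi.add_apply, Pi.sub_apply, Pi.div_apply, Pi.ofNat_apply]
  ring

section LowerBoundLift

variable {κ : Type*} [DecidableEq κ] {d u l : κ → ℝ} {j : κ} {μ t : ℝ}

lemma diagonal_mulVec_lowerBoundLift [Fintype κ] {w : κ → ℝ} (hw : w j = u j)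
    (hkey : μ * (u j - t) = (t - l j) * d j) :
    diagonal (d + μ • Pi.single j 1) *ᵥ ((u + (l + (t - l j) • Pi.single j 1)) / 2)
      = diagonal d *ᵥ ((u + l) / 2) + diagonal (μ • Pi.single j 1) *ᵥ w := by
  funext k
  simp only [mulVec_diagonal, Pi.add_apply, Pi.smul_apply, Pi.div_apply, Pi.ofNat_apply,
    smul_eq_mul]
  rcases eq_or_ne k j with rfl | hk
  · simp only [Pi.single_eq_same, mul_one, hw]
    linear_combination (-1 / 2 : ℝ) * hkey
  · simp [Pi.single_eq_of_ne hk]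

lemma lowerBoundLift_summand_eq {w : κ → ℝ} (hw : w j = u j)
    (hkey : μ * (u j - t) = (t - l j) * d j) (k : κ) :
    (d + μ • Pi.single j 1 : κ → ℝ) k * ((u k + (l + (t - l j) • Pi.single j 1 : κ → ℝ) k) / 2
        * w k - u k * (l + (t - l j) • Pi.single j 1 : κ → ℝ) k)
      = d k * ((u k + l k) / 2 * w k - u k * l k) := by
  simp only [Pi.add_apply, Pi.smul_apply, smul_eq_mul]
  rcases eq_or_ne k j with rfl | hk
  · simp only [Pi.single_eq_same, mul_one, hw]
    linear_combination (u k / 2) * hkey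
  · simp [Pi.single_eq_of_ne hk]

end LowerBoundLift

theorem stmt_19_general {n m : ℕ} (A : Matrix (Fin n) (Fin m) ℝ) (u l : Fin m → ℝ)
    (d : Fin m → ℝ)
    (hpd : (A * Matrix.diagonal d * Aᵀ).PosDef)
    (ybar : Fin n → ℝ)
    (hybar : ybar =
      (A * Matrix.diagonal d * Aᵀ)⁻¹ *ᵥ (A *ᵥ (Matrix.diagonal d *ᵥ ((u + l) / 2))))
    (j : Fin m) (hdj : 0 < d j)
    (hcenter : (fun k => A k j) ⬝ᵥ ybar = u j)
    (ltj : ℝ) (hlt1 : l j < ltj) (hlt2 : ltj < u j)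
    (μ : ℝ) (hμ : μ = (ltj - l j) / (u j - ltj) * d j)
    (dt lt : Fin m → ℝ)
    (hdt : dt = d + μ • (Pi.single j 1 : Fin m → ℝ))
    (hlt : lt = l + (ltj - l j) • (Pi.single j 1 : Fin m → ℝ)) :
    (A * Matrix.diagonal dt * Aᵀ).PosDef ∧
    (A * Matrix.diagonal dt * Aᵀ)⁻¹ *ᵥ (A *ᵥ (Matrix.diagonal dt *ᵥ ((u + lt) / 2))) = ybar ∧
    fval A u dt lt = fval A u d l ∧
    d ≤ dt ∧ d j < dt j := by
  subst hdt hlt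
  change ybar = ellipsoidCenter A d ((u + l) / 2) at hybar
  have hgap : 0 < u j - ltj := sub_pos.2 hlt2
  have hμpos : 0 < μ := hμ ▸ by have := sub_pos.2 hlt1; positivity
  have hkey : μ * (u j - ltj) = (ltj - l j) * d j := by rw [hμ]; field_simp
  have hw : (Aᵀ *ᵥ ybar) j = u j := hcenter
  have hstep : 0 ≤ μ • (Pi.single j 1 : Fin m → ℝ) :=
    smul_nonneg hμpos.le (Pi.single_nonneg.2 zero_le_one)
  have hpd' := hpd.mul_diagonal_add_mul_transpose hstep
  have hcenter' : ellipsoidCenter A _ _ = ybar := ellipsoidCenter_eq_of_mulVec hpd'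
    (mul_diagonal_add_mul_transpose_mulVec (hybar ▸ mulVec_ellipsoidCenter hpd _)
      (diagonal_mulVec_lowerBoundLift hw hkey))
  refine ⟨hpd', hcenter', ?_, le_add_of_nonneg_right hstep, by simpa using hμpos⟩
  rw [fval_eq_sum, fval_eq_sum, hcenter', ← hybar]
  exact Finset.sum_congr rfl fun k _ => lowerBoundLift_summand_eq hw hkey k

/-- Proposition 6.2 of the paper. Increasing both `d_j` and `l_j`
while the center satisfies `a_jᵀȳ = u_j`: the new system `(d̃, l̃)` has positive definite
`AD̃Aᵀ`, the same center `ȳ`, and the same value of `f`; moreover `d̃ ≥ d` with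
`d̃_j > d_j`, so the move is a Pareto-improving step. -/
theorem stmt_19 {n m : ℕ} (A : Matrix (Fin n) (Fin m) ℝ) (u l : Fin m → ℝ)
    (d : Fin m → ℝ)
    (hd : 0 ≤ d)
    (hpd : (A * Matrix.diagonal d * Aᵀ).PosDef)
    (ybar : Fin n → ℝ)
    (hybar : ybar =
      (A * Matrix.diagonal d * Aᵀ)⁻¹ *ᵥ (A *ᵥ (Matrix.diagonal d *ᵥ ((u + l) / 2))))
    (j : Fin m) (hdj : 0 < d j)
    (hcenter : (fun k => A k j) ⬝ᵥ ybar = u j)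
    (ltj : ℝ) (hlt1 : l j < ltj) (hlt2 : ltj < u j)
    (μ : ℝ) (hμ : μ = (ltj - l j) / (u j - ltj) * d j)
    (dt lt : Fin m → ℝ)
    (hdt : dt = d + μ • (Pi.single j 1 : Fin m → ℝ))
    (hlt : lt = l + (ltj - l j) • (Pi.single j 1 : Fin m → ℝ)) :
    (A * Matrix.diagonal dt * Aᵀ).PosDef ∧
    (A * Matrix.diagonal dt * Aᵀ)⁻¹ *ᵥ (A *ᵥ (Matrix.diagonal dt *ᵥ ((u + lt) / 2))) = ybar ∧
    fval A u dt lt = fval A u d l ∧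
    d ≤ dt ∧ d j < dt j :=
  stmt_19_general A u l d hpd ybar hybar j hdj hcenter ltj hlt1 hlt2 μ hμ dt lt hdt hlt
end
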